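/- arXiv:1602.09022 — 10 statements merged into one kernel-verified Lean document; each statement's English description precedes it below -/
import Mathlib

section
/- Let G be a finite undirected graph with vertices s and t, let P be a rooted path digraph on k vertices (k ≥ 2), and let X ⊆ {1,…,k−1} be nonempty. If G contains a path of length at most |X| from s to t, then there exists an embedding of P into the rooted digraph B(G,P,X,s,t). -/
/-- A rooted path digraph on `k` vertices: a directed graph on `{1,…,k}` whose edges
all join consecutive vertices, with at least one direction present between any two
consecutive vertices; vertex `1` is the root. -/
structure RootedPathDigraph (k : ℕ) where
  EP : ℕ → ℕ → Prop
  subset : ∀ a b, EP a b → ∃ i, 1 ≤ i ∧ i + 1 ≤ k ∧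
    ((a = i ∧ b = i + 1) ∨ (a = i + 1 ∧ b = i))
  total : ∀ i, 1 ≤ i → i + 1 ≤ k → EP i (i + 1) ∨ EP (i + 1) i

/-- The edge relation of the rooted digraph `B(G,P,X,s,t)`: a pair
`((g,q),(g',q'))` is an edge iff `(q,q') ∈ E_P` and, for the position
`i = min q q'` (so `{q,q'} = {i,i+1}`), writing `gLow`/`gHigh` for the
`V`-components paired with `i`/`i+1`: if `i+1 = k` then `gHigh = t`;
if `i` is the minimum of `X` then `gLow = s`; if `i ∉ X` then `gLow = gHigh`;
and if `i ∈ X` then `gLow = gHigh` or they are adjacent in `G`. -/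
def BEdge {V : Type*} (G : SimpleGraph V) {k : ℕ} (P : RootedPathDigraph k)
    (X : Finset ℕ) (s t : V) (b b' : V × ℕ) : Prop :=
  P.EP b.2 b'.2 ∧
  (min b.2 b'.2 + 1 = k → (if b.2 ≤ b'.2 then b'.1 else b.1) = t) ∧
  (min b.2 b'.2 = sInf (↑X : Set ℕ) → (if b.2 ≤ b'.2 then b.1 else b'.1) = s) ∧
  (min b.2 b'.2 ∉ X →
    (if b.2 ≤ b'.2 then b.1 else b'.1) = (if b.2 ≤ b'.2 then b'.1 else b.1)) ∧
  (min b.2 b'.2 ∈ X →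
    (if b.2 ≤ b'.2 then b.1 else b'.1) = (if b.2 ≤ b'.2 then b'.1 else b.1) ∨
    G.Adj (if b.2 ≤ b'.2 then b.1 else b'.1) (if b.2 ≤ b'.2 then b'.1 else b.1))

/-- An embedding of the rooted path digraph `P` into `B(G,P,X,s,t)`: an injective map
`h : {1,…,k} → V × {1,…,k}` with `h(1) = (s,1)` sending every edge of `P` to an edge
of `B`. -/
def IsEmbeddingB {V : Type*} (G : SimpleGraph V) {k : ℕ} (P : RootedPathDigraph k)
    (X : Finset ℕ) (s t : V) (h : ℕ → V × ℕ) : Prop :=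
  Set.InjOn h (Set.Icc 1 k) ∧ h 1 = (s, 1) ∧
  (∀ q ∈ Set.Icc 1 k, (h q).2 ∈ Set.Icc 1 k) ∧
  (∀ q q', P.EP q q' → BEdge G P X s t (h q) (h q'))

/-- Claim 1 in the proof of Lemma 4.1: if `G` contains a path of length at most `|X|`
from `s` to `t`, then `P` embeds into `B(G,P,X,s,t)`. -/
theorem stmt1 {V : Type*} [Fintype V] (G : SimpleGraph V) (s t : V)
    (k : ℕ) (hk : 2 ≤ k) (P : RootedPathDigraph k)
    (X : Finset ℕ) (hXne : X.Nonempty) (hXsub : ↑X ⊆ Set.Icc 1 (k - 1))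
    (hpath : ∃ p : G.Walk s t, p.IsPath ∧ p.length ≤ X.card) :
    ∃ h : ℕ → V × ℕ, IsEmbeddingB G P X s t h := by
  classical
  obtain ⟨p, hp, hlen⟩ := hpath
  set c : ℕ → ℕ := fun q => (X.filter (· < q)).card with hcdef
  set g : ℕ → V := fun q => p.getVert (min p.length (c q)) with hgdef
  -- basic count facts
  have hstep_mem : ∀ i, i ∈ X → c (i + 1) = c i + 1 := by
    intro i hi
    have hset : X.filter (· < i + 1) = insert i (X.filter (· < i)) := by
      ext x
      simp only [Finset.mem_filter, Finset.mem_insert, Nat.lt_succ_iff]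
      constructor
      · rintro ⟨hx, hxi⟩
        rcases eq_or_lt_of_le hxi with h | h
        · exact Or.inl h
        · exact Or.inr ⟨hx, h⟩
      · rintro (rfl | ⟨hx, h⟩)
        · exact ⟨hi, le_refl _⟩
        · exact ⟨hx, h.le⟩
    have hnot : i ∉ X.filter (· < i) := by simp
    simp only [hcdef, hset, Finset.card_insert_of_notMem hnot]
  have hstep_not : ∀ i, i ∉ X → c (i + 1) = c i := by
    intro i hi
    have hset : X.filter (· < i + 1) = X.filter (· < i) := by
      ext x
      simp only [Finset.mem_filter, Nat.lt_succ_iff]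
      constructor
      · rintro ⟨hx, hxi⟩
        refine ⟨hx, lt_of_le_of_ne hxi ?_⟩
        rintro rfl; exact hi hx
      · rintro ⟨hx, h⟩; exact ⟨hx, h.le⟩
    simp only [hcdef, hset]
  have hck : c k = X.card := by
    have hset : X.filter (· < k) = X := by
      apply Finset.filter_true_of_mem
      intro x hx
      have hx' := hXsub hx
      have : x ≤ k - 1 := hx'.2
      omega
    simp only [hcdef, hset]
  have hg1 : ∀ q, q ≤ sInf (↑X : Set ℕ) → g q = s := by
    intro q hq
    have hcq : c q = 0 := by
      have : X.filter (· < q) = ∅ := by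
        apply Finset.filter_false_of_mem
        intro x hx
        have h1 : sInf (↑X : Set ℕ) ≤ x := Nat.sInf_le (by exact hx)
        omega
      simp only [hcdef, this, Finset.card_empty]
    simp only [hgdef, hcq, Nat.min_zero, SimpleGraph.Walk.getVert_zero]
  have hInf_mem : sInf (↑X : Set ℕ) ∈ X := by
    have : ((↑X : Set ℕ)).Nonempty := ⟨hXne.choose, hXne.choose_spec⟩
    exact Nat.sInf_mem this
  have hInf1 : 1 ≤ sInf (↑X : Set ℕ) := (hXsub hInf_mem).1
  -- the four edge conditions for each consecutive pair
  have key : ∀ i : ℕ, 1 ≤ i → i + 1 ≤ k →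
      (i + 1 = k → g (i + 1) = t) ∧ (i = sInf (↑X : Set ℕ) → g i = s) ∧
      (i ∉ X → g i = g (i + 1)) ∧
      (i ∈ X → g i = g (i + 1) ∨ G.Adj (g i) (g (i + 1))) := by
    intro i hi1 hik
    refine ⟨?_, ?_, ?_, ?_⟩
    · rintro rfl
      have : min p.length (c (i + 1)) = p.length := by
        rw [hck]; omega
      simp only [hgdef, this, SimpleGraph.Walk.getVert_length]
    · rintro rfl
      exact hg1 _ le_rfl
    · intro hi
      simp only [hgdef, hstep_not i hi]
    · intro hi
      by_cases hcr : p.length ≤ c i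
      · left
        have h1 : min p.length (c i) = p.length := min_eq_left hcr
        have h2 : min p.length (c (i + 1)) = p.length := by
          rw [hstep_mem i hi]; omega
        simp only [hgdef, h1, h2]
      · right
        push_neg at hcr
        have h1 : min p.length (c i) = c i := min_eq_right hcr.le
        have h2 : min p.length (c (i + 1)) = c i + 1 := by
          rw [hstep_mem i hi]; omega
        simp only [hgdef, h1, h2]
        exact p.adj_getVert_succ hcr
  refine ⟨fun q => (g q, q), ?_, ?_, ?_, ?_⟩
  · intro a _ b _ hab
    exact congrArg Prod.snd hab
  · have : g 1 = s := hg1 1 hInf1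
    simp [this]
  · intro q hq
    exact hq
  · intro q q' hqq'
    obtain ⟨i, hi1, hik, hcase⟩ := P.subset q q' hqq'
    obtain ⟨ha, hb, hcC, hd⟩ := key i hi1 hik
    rcases hcase with ⟨rfl, rfl⟩ | ⟨rfl, rfl⟩
    · have hle : q ≤ q + 1 := Nat.le_succ q
      refine ⟨hqq', ?_, ?_, ?_, ?_⟩ <;>
        simp only [min_eq_left hle, if_pos hle] <;> assumption
    · have hle : ¬ (q' + 1 ≤ q') := Nat.not_succ_le_self q'
      have hmin : (q' + 1) ⊓ q' = q' := min_eq_right (Nat.le_succ q')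
      refine ⟨hqq', ?_, ?_, ?_, ?_⟩ <;>
        simp only [hmin, if_neg hle] <;> assumption
end

section
/- Let G be a finite undirected graph with vertices s and t, let P be a rooted path digraph on k vertices (k ≥ 2), let X ⊆ {1,…,k−1} be nonempty, and let B = B(G,P,X,s,t). If h is an embedding of P into B such that the second component of h(q) equals q for every q ∈ {1,…,k}, then G contains a path of length at most |X| from s to t. -/
/-- Claim 3 (second part) in the proof of Lemma 4.1: if `h` is an embedding of `P`
into `B(G,P,X,s,t)` whose second components are trivial (`π(q) = q` for all
`q ∈ {1,…,k}`), then `G` contains a path of length at most `|X|` from `s` to `t`. -/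
theorem stmt2 {V : Type*} [Fintype V] (G : SimpleGraph V) (s t : V)
    (k : ℕ) (hk : 2 ≤ k) (P : RootedPathDigraph k)
    (X : Finset ℕ) (hXne : X.Nonempty) (hXsub : ↑X ⊆ Set.Icc 1 (k - 1))
    (h : ℕ → V × ℕ) (hemb : IsEmbeddingB G P X s t h)
    (htriv : ∀ q ∈ Set.Icc 1 k, (h q).2 = q) :
    ∃ p : G.Walk s t, p.IsPath ∧ p.length ≤ X.card := by
  classical
  obtain ⟨hinj, h1, hrange, hedge⟩ := hemb
  set g : ℕ → V := fun q => (h q).1 with hg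
  have key : ∀ i, 1 ≤ i → i + 1 ≤ k →
      (g i = g (i+1) ∨ (i ∈ X ∧ G.Adj (g i) (g (i+1)))) ∧
        (i + 1 = k → g (i+1) = t) := by
    intro i hi1 hik
    have hhi : (h i).2 = i := htriv i ⟨hi1, by omega⟩
    have hhi1 : (h (i+1)).2 = i + 1 := htriv (i+1) ⟨by omega, hik⟩
    have hconc : (i + 1 = k → g (i+1) = t) ∧
        (i ∉ X → g i = g (i+1)) ∧
        (i ∈ X → g i = g (i+1) ∨ G.Adj (g i) (g (i+1))) := by
      rcases P.total i hi1 hik with he | he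
      · have hb := hedge i (i+1) he
        rw [BEdge, hhi, hhi1] at hb
        simp only [show min i (i+1) = i by omega,
          if_pos (show i ≤ i + 1 by omega)] at hb
        exact ⟨hb.2.1, hb.2.2.2.1, hb.2.2.2.2⟩
      · have hb := hedge (i+1) i he
        rw [BEdge, hhi, hhi1] at hb
        simp only [show min (i+1) i = i by omega,
          if_neg (show ¬ (i + 1 ≤ i) by omega)] at hb
        exact ⟨hb.2.1, hb.2.2.2.1, hb.2.2.2.2⟩
    refine ⟨?_, hconc.1⟩
    by_cases hx : i ∈ X
    · rcases hconc.2.2 hx with heq | hadj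
      · exact Or.inl heq
      · exact Or.inr ⟨hx, hadj⟩
    · exact Or.inl (hconc.2.1 hx)
  have main : ∀ j, 1 ≤ j → j ≤ k →
      ∃ w : G.Walk s (g j), w.length ≤ (X ∩ Finset.Ico 1 j).card := by
    intro j
    induction j with
    | zero => omega
    | succ n ih =>
      intro _ hnk
      rcases Nat.eq_zero_or_pos n with rfl | hn
      · have hs1 : g 1 = s := by rw [hg]; simp [h1]
        exact ⟨(SimpleGraph.Walk.nil).copy rfl hs1.symm, by simp⟩
      · obtain ⟨w, hw⟩ := ih hn (by omega)
        rcases (key n hn (by omega)).1 with heq | ⟨hxX, hadj⟩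
        · refine ⟨w.copy rfl heq, ?_⟩
          rw [SimpleGraph.Walk.length_copy]
          exact hw.trans (Finset.card_le_card
            (Finset.inter_subset_inter (le_refl X) (Finset.Ico_subset_Ico_right (by omega))))
        · refine ⟨w.concat hadj, ?_⟩
          rw [SimpleGraph.Walk.length_concat]
          have hsub : insert n (X ∩ Finset.Ico 1 n) ⊆ X ∩ Finset.Ico 1 (n+1) := by
            intro x hx
            simp only [Finset.mem_insert, Finset.mem_inter, Finset.mem_Ico] at hx ⊢
            rcases hx with rfl | ⟨hx1, hx2, hx3⟩
            · exact ⟨hxX, by omega⟩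
            · exact ⟨hx1, by omega⟩
          have hnotmem : n ∉ X ∩ Finset.Ico 1 n := by
            simp [Finset.mem_inter]
          calc w.length + 1 ≤ (X ∩ Finset.Ico 1 n).card + 1 := by omega
            _ = (insert n (X ∩ Finset.Ico 1 n)).card :=
                (Finset.card_insert_of_notMem hnotmem).symm
            _ ≤ (X ∩ Finset.Ico 1 (n+1)).card := Finset.card_le_card hsub
  obtain ⟨w, hw⟩ := main k (by omega) le_rfl
  have hgt : g k = t := by
    have := (key (k-1) (by omega) (by omega)).2 (by omega)
    rwa [show k - 1 + 1 = k by omega] at this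
  refine ⟨(w.copy rfl hgt).bypass, SimpleGraph.Walk.bypass_isPath _, ?_⟩
  have hbl := (w.copy rfl hgt).length_bypass_le
  rw [SimpleGraph.Walk.length_copy] at hbl
  have hXc : (X ∩ Finset.Ico 1 k).card ≤ X.card :=
    Finset.card_le_card (Finset.inter_subset_left)
  omega
end

section
/- Let G be a finite undirected graph with vertices s and t, let P be a rooted path digraph on k vertices (k ≥ 2), let ℓ ≥ 1, and let 1 ≤ i_1 < i_2 < … < i_ℓ ≤ k−2 be indices such that for every j ∈ {1,…,ℓ} the edge e_{i_j + 1} of P is unfoldable. Set X = {i_1,…,i_ℓ}. Then G contains a path of length at most ℓ from s to t if and only if there exists an embedding of P into the rooted digraph B(G,P,X,s,t). -/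
/-- `atypSub P i j m` encodes `atyp(e_i) ⊆ atyp(e_j^{−m})`: inclusion of the atomic
type of the edge `e_i` in the atomic type of the edge `e_j` reversed `m` times. -/
def atypSub {k : ℕ} (P : RootedPathDigraph k) (i j m : ℕ) : Prop :=
  (Even m ∧ (P.EP i (i + 1) → P.EP j (j + 1)) ∧ (P.EP (i + 1) i → P.EP (j + 1) j) ∧
    (i = 1 → j = 1)) ∨
  (Odd m ∧ (P.EP i (i + 1) → P.EP (j + 1) j) ∧ (P.EP (i + 1) i → P.EP j (j + 1)) ∧
    i ≠ 1)

/-- The edge `e_i` of `P` is unfoldable of degree `d`: `i > d` and for every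
`l ∈ {1,…,d}` the inclusion `atyp(e_i) ⊆ atyp(e_{i−l}^{−l})` fails. -/
def UnfoldableDeg {k : ℕ} (P : RootedPathDigraph k) (i d : ℕ) : Prop :=
  d < i ∧ ∀ l, 1 ≤ l → l ≤ d → ¬ atypSub P i (i - l) l

/-- Correctness of the Case 1 reduction in the proof of Lemma 4.1 (equation (3)):
if `X = {i_1,…,i_ℓ} ⊆ {1,…,k−2}` is such that each edge `e_{i_j+1}` is unfoldable,
then `G` has a path of length at most `ℓ` from `s` to `t` iff `P` embeds into
`B(G,P,X,s,t)`. -/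
theorem stmt5 {V : Type*} [Fintype V] (G : SimpleGraph V) (s t : V)
    (k : ℕ) (hk : 2 ≤ k) (P : RootedPathDigraph k)
    (l : ℕ) (hl : 1 ≤ l) (X : Finset ℕ)
    (hXsub : ↑X ⊆ Set.Icc 1 (k - 2)) (hXcard : X.card = l)
    (hunf : ∀ i ∈ X, UnfoldableDeg P (i + 1) 1) :
    (∃ p : G.Walk s t, p.IsPath ∧ p.length ≤ l) ↔
      ∃ h : ℕ → V × ℕ, IsEmbeddingB G P X s t h := by
    classical
  have hXmem : ∀ i ∈ X, 1 ≤ i ∧ i ≤ k - 2 := fun i hi => hXsub hi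
  constructor
  · -- forward direction: path gives embedding
    rintro ⟨p, _, hlen⟩
    have hmono : ∀ q, (X.filter (· < q)).card ≤ (X.filter (· < q + 1)).card := by
      intro q
      apply Finset.card_le_card
      intro j hj
      simp only [Finset.mem_filter] at hj ⊢
      exact ⟨hj.1, by omega⟩
    have hcsucc_not : ∀ q, q ∉ X → (X.filter (· < q + 1)).card = (X.filter (· < q)).card := by
      intro q hq
      congr 1
      ext j
      simp only [Finset.mem_filter]
      constructor
      · rintro ⟨hj, hj'⟩
        refine ⟨hj, ?_⟩
        rcases Nat.lt_succ_iff_lt_or_eq.mp hj' with h | rfl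
        · exact h
        · exact absurd hj hq
      · rintro ⟨hj, hj'⟩; exact ⟨hj, by omega⟩
    have hcsucc_mem : ∀ q, q ∈ X → (X.filter (· < q + 1)).card = (X.filter (· < q)).card + 1 := by
      intro q hq
      have hins : X.filter (· < q + 1) = insert q (X.filter (· < q)) := by
        ext j
        simp only [Finset.mem_filter, Finset.mem_insert]
        constructor
        · rintro ⟨hj, hj'⟩
          rcases Nat.lt_succ_iff_lt_or_eq.mp hj' with h | rfl
          · exact Or.inr ⟨hj, h⟩
          · exact Or.inl rfl
        · rintro (rfl | ⟨hj, hj'⟩)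
          · exact ⟨hq, by omega⟩
          · exact ⟨hj, by omega⟩
      rw [hins, Finset.card_insert_of_notMem (by simp)]
    have hc1 : (X.filter (· < 1)).card = 0 := by
      rw [Finset.card_eq_zero]
      ext j
      simp only [Finset.mem_filter, Finset.notMem_empty, iff_false, not_and]
      intro hj hj'
      have := (hXmem j hj).1
      omega
    have hck : (X.filter (· < k)).card = l := by
      rw [Finset.filter_true_of_mem (fun i hi => by have := hXmem i hi; omega), hXcard]
    -- the V-component of the embedding
    set g : ℕ → V := fun q => p.getVert (min ((X.filter (· < q)).card) p.length) with hg
    have key : ∀ i, 1 ≤ i → i + 1 ≤ k →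
        (i + 1 = k → g (i + 1) = t) ∧ (i = sInf (↑X : Set ℕ) → g i = s) ∧
        (i ∉ X → g i = g (i + 1)) ∧
        (i ∈ X → g i = g (i + 1) ∨ G.Adj (g i) (g (i + 1))) := by
      intro i hi1 hik
      refine ⟨?_, ?_, ?_, ?_⟩
      · intro hik'
        simp only [hg, hik', hck]
        rw [min_eq_right hlen, p.getVert_length]
      · intro hinf
        have hc0 : (X.filter (· < i)).card = 0 := by
          rw [Finset.card_eq_zero]
          ext j
          simp only [Finset.mem_filter, Finset.notMem_empty, iff_false, not_and]
          intro hj hj'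
          have := Nat.sInf_le (show j ∈ (↑X : Set ℕ) from hj)
          omega
        simp only [hg, hc0]
        simp [p.getVert_zero]
      · intro hiX
        simp only [hg, hcsucc_not i hiX]
      · intro hiX
        simp only [hg, hcsucc_mem i hiX]
        rcases le_or_gt p.length ((X.filter (· < i)).card) with h | h
        · left
          rw [min_eq_right h, min_eq_right (by omega)]
        · right
          rw [min_eq_left (by omega), min_eq_left (by omega)]
          exact p.adj_getVert_succ h
    refine ⟨fun q => (g q, q), ?_, ?_, ?_, ?_⟩
    · intro a _ b _ hab
      exact congrArg Prod.snd hab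
    · show (g 1, 1) = (s, 1)
      have : g 1 = s := by
        simp only [hg, hc1]
        simp [p.getVert_zero]
      rw [this]
    · intro q hq
      exact hq
    · intro q q' hqq'
      obtain ⟨i, hi1, hik, hcase⟩ := P.subset q q' hqq'
      rcases hcase with ⟨rfl, rfl⟩ | ⟨rfl, rfl⟩
      · obtain ⟨hkey1, hkey2, hkey3, hkey4⟩ := key q hi1 hik
        have hle : ((g q, q).2 : ℕ) ≤ ((g (q+1), q+1)).2 := by simp
        refine ⟨hqq', ?_, ?_, ?_, ?_⟩ <;>
          simp only [if_pos hle, show min ((g q, q).2) ((g (q+1), q+1)).2 = q from by simp] <;>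
          assumption
      · obtain ⟨hkey1, hkey2, hkey3, hkey4⟩ := key q' hi1 hik
        have hnle : ¬ (((g (q'+1), q'+1).2 : ℕ) ≤ ((g q', q')).2) := by simp
        refine ⟨hqq', ?_, ?_, ?_, ?_⟩ <;>
          simp only [if_neg hnle, show min ((g (q'+1), q'+1).2) ((g q', q')).2 = q' from by simp] <;>
          assumption
  · -- converse: embedding gives path
    rintro ⟨h, hinj, h1, _, hedge⟩
    -- helper: the level components of adjacent vertices
    have hstep : ∀ q, 1 ≤ q → q + 1 ≤ k → ∃ i, 1 ≤ i ∧ i + 1 ≤ k ∧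
        (((h q).2 = i ∧ (h (q+1)).2 = i + 1) ∨ ((h q).2 = i + 1 ∧ (h (q+1)).2 = i)) := by
      intro q hq hqk
      rcases P.total q hq hqk with hE | hE
      · obtain ⟨i, hi1, hik, hc⟩ := P.subset _ _ (hedge _ _ hE).1
        exact ⟨i, hi1, hik, hc⟩
      · obtain ⟨i, hi1, hik, hc⟩ := P.subset _ _ (hedge _ _ hE).1
        exact ⟨i, hi1, hik, hc.symm.imp And.symm And.symm⟩
    have hγeq : ∀ a b : ℕ, P.EP a b → min (h a).2 (h b).2 ∉ X → (h a).1 = (h b).1 := by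
      intro a b hE hmin
      have := (hedge a b hE).2.2.2.1 hmin
      split at this
      · exact this
      · exact this.symm
    -- the level component is the identity
    have hpi : ∀ q, 1 ≤ q → q ≤ k → (h q).2 = q := by
      intro q
      induction q using Nat.strong_induction_on with
      | _ q ih =>
        intro hq1 hqk
        rcases q with _ | _ | q
        · omega
        · rw [h1]
        · rcases Nat.eq_zero_or_pos q with rfl | hqpos
          · obtain ⟨i, hi1, _, hc⟩ := hstep 1 le_rfl (by omega)
            have hp1 : (h 1).2 = 1 := by rw [h1]
            show (h 2).2 = 2
            rw [show (1:ℕ) + 1 = 2 from rfl] at hc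
            rcases hc with ⟨ha, hb⟩ | ⟨ha, hb⟩ <;> omega
          ·
            have hq1' : (h (q+1)).2 = q + 1 := ih (q+1) (by omega) (by omega) (by omega)
            have hq0' : (h q).2 = q := ih q (by omega) (by omega) (by omega)
            show (h (q + 2)).2 = q + 2
            obtain ⟨i, hi1, hik, hc⟩ := hstep (q+1) (by omega) (by omega)
            rw [show q + 1 + 1 = q + 2 from rfl] at hc
            rcases hc with ⟨ha, hb⟩ | ⟨ha, hb⟩
            · omega
            · -- folding down: (h (q+2)).2 = q
              exfalso
              have hb' : (h (q+2)).2 = q := by omega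
              by_cases hqX : q ∈ X
              · -- contradicts unfoldability
                have hunf' := (hunf q hqX).2 1 le_rfl le_rfl
                apply hunf'
                refine Or.inr ⟨odd_one, ?_, ?_, by omega⟩
                all_goals simp only [show q + 1 - 1 = q from by omega]
                · intro hE
                  have := (hedge _ _ hE).1
                  rwa [hq1', hb'] at this
                · intro hE
                  have := (hedge _ _ hE).1
                  rwa [hq1', hb'] at this
              · -- contradicts injectivity
                have e1 : (h q).1 = (h (q+1)).1 := by
                  rcases P.total q (by omega) (by omega) with hE | hE
                  · exact hγeq q (q+1) hE (by rw [hq0', hq1']; simpa using hqX)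
                  · exact (hγeq (q+1) q hE (by rw [hq0', hq1']; simpa [min_comm] using hqX)).symm
                have e2 : (h (q+1)).1 = (h (q+2)).1 := by
                  rcases P.total (q+1) (by omega) (by omega) with hE | hE
                  · exact hγeq (q+1) (q+2) hE (by rw [hb', hq1']; simpa [min_comm] using hqX)
                  · exact (hγeq (q+2) (q+1) hE (by rw [hb', hq1']; simpa using hqX)).symm
                have heq : h q = h (q+2) := by
                  apply Prod.ext
                  · rw [e1, e2]
                  · rw [hq0', hb']
                have := hinj (Set.mem_Icc.mpr ⟨by omega, by omega⟩)
                  (Set.mem_Icc.mpr ⟨by omega, by omega⟩) heq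
                omega
    -- with level = identity, extract conditions on the V-components
    have hcond : ∀ i, 1 ≤ i → i + 1 ≤ k →
        ((h i).1 = (h (i+1)).1 ∨ (i ∈ X ∧ G.Adj (h i).1 (h (i+1)).1)) ∧
        (i + 1 = k → (h (i+1)).1 = t) := by
      intro i hi1 hik
      have hp : (h i).2 = i := hpi i hi1 (by omega)
      have hp' : (h (i+1)).2 = i + 1 := hpi (i+1) (by omega) hik
      rcases P.total i hi1 hik with hE | hE
      · obtain ⟨-, hB2, -, hB4, hB5⟩ := hedge _ _ hE
        rw [hp, hp'] at hB2 hB4 hB5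
        simp only [if_pos (show i ≤ i + 1 from by omega),
          show min i (i+1) = i from by omega] at hB2 hB4 hB5
        constructor
        · by_cases hiX : i ∈ X
          · rcases hB5 hiX with he | ha
            · exact Or.inl he
            · exact Or.inr ⟨hiX, ha⟩
          · exact Or.inl (hB4 hiX)
        · exact hB2
      · obtain ⟨-, hB2, -, hB4, hB5⟩ := hedge _ _ hE
        rw [hp, hp'] at hB2 hB4 hB5
        simp only [if_neg (show ¬ (i + 1 ≤ i) from by omega),
          show min (i+1) i = i from by omega] at hB2 hB4 hB5
        constructor
        · by_cases hiX : i ∈ X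
          · rcases hB5 hiX with he | ha
            · exact Or.inl he
            · exact Or.inr ⟨hiX, ha⟩
          · exact Or.inl (hB4 hiX)
        · exact hB2
    -- build a walk of bounded length
    have hwalk : ∀ q, 1 ≤ q → q ≤ k →
        ∃ w : G.Walk s (h q).1, w.length ≤ (X.filter (· < q)).card := by
      intro q
      induction q with
      | zero => omega
      | succ q ihq =>
        intro _ hqk
        rcases Nat.eq_or_lt_of_le (show 1 ≤ q + 1 from by omega) with he | hlt
        · have e : (h (q + 1)).1 = s := by rw [show q + 1 = 1 from he.symm, h1]
          refine ⟨(SimpleGraph.Walk.nil : G.Walk s s).copy rfl e.symm, by simp⟩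
        · obtain ⟨w, hw⟩ := ihq (by omega) (by omega)
          obtain ⟨hc1', -⟩ := hcond q (by omega) hqk
          rcases hc1' with he | ⟨hqX, hadj⟩
          · refine ⟨w.copy rfl he, ?_⟩
            rw [SimpleGraph.Walk.length_copy]
            calc w.length ≤ (X.filter (· < q)).card := hw
              _ ≤ (X.filter (· < q + 1)).card := by
                  apply Finset.card_le_card
                  intro j hj
                  simp only [Finset.mem_filter] at hj ⊢
                  exact ⟨hj.1, by omega⟩
          · refine ⟨w.concat hadj, ?_⟩
            rw [SimpleGraph.Walk.length_concat]
            have hsub : insert q (X.filter (· < q)) ⊆ X.filter (· < q + 1) := by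
              intro j hj
              simp only [Finset.mem_insert, Finset.mem_filter] at hj ⊢
              rcases hj with rfl | ⟨hj1, hj2⟩
              · exact ⟨hqX, by omega⟩
              · exact ⟨hj1, by omega⟩
            have := Finset.card_le_card hsub
            rw [Finset.card_insert_of_notMem (by simp)] at this
            omega
    obtain ⟨w, hw⟩ := hwalk k (by omega) le_rfl
    have hkk : k - 1 + 1 = k := by omega
    have ht : (h k).1 = t := by
      obtain ⟨-, hc2⟩ := hcond (k-1) (by omega) (by omega)
      rw [hkk] at hc2
      exact hc2 rfl
    have hwl : w.length ≤ l := by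
      refine le_trans hw ?_
      rw [Finset.filter_true_of_mem (fun i hi => by have := hXmem i hi; omega), hXcard]
    let w' : G.Walk s t := w.copy rfl ht
    have hwl' : w'.length ≤ l := by simpa [w', SimpleGraph.Walk.length_copy] using hwl
    exact ⟨w'.bypass, w'.bypass_isPath, le_trans w'.length_bypass_le hwl'⟩
end

section
/- Let G be a finite undirected graph with vertices s and t, let P be a rooted path digraph on k vertices (k ≥ 2), let ℓ ≥ 1, and let i ∈ {ℓ+1,…,k−1} be such that the edge e_i of P is unfoldable of degree ℓ. Set X = {i−ℓ, i−ℓ+1, …, i−1}. Then G contains a path of length at most ℓ from s to t if and only if there exists an embedding of P into the rooted digraph B(G,P,X,s,t). -/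
private lemma chainWalk {V : Type*} (G : SimpleGraph V) (f : ℕ → V) :
    ∀ (n a : ℕ), (∀ q, a ≤ q → q < a + n → f q = f (q + 1) ∨ G.Adj (f q) (f (q + 1))) →
    ∃ w : G.Walk (f a) (f (a + n)), w.length ≤ n := by
  intro n
  induction n with
  | zero => exact fun a _ => ⟨SimpleGraph.Walk.nil, by simp⟩
  | succ n ih =>
    intro a hstep
    obtain ⟨w, hw⟩ := ih a (fun q h1 h2 => hstep q h1 (by omega))
    rcases hstep (a + n) (by omega) (by omega) with heq | hadj
    · exact ⟨w.copy rfl heq, by rw [SimpleGraph.Walk.length_copy]; omega⟩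
    · exact ⟨w.concat hadj, by rw [SimpleGraph.Walk.length_concat]; omega⟩

/-- Correctness of the Case 2 reduction in the proof of Lemma 4.1 (equation (4)):
if the edge `e_i` (with `ℓ+1 ≤ i ≤ k−1`) is unfoldable of degree `ℓ` and
`X = {i−ℓ,…,i−1}`, then `G` has a path of length at most `ℓ` from `s` to `t` iff
`P` embeds into `B(G,P,X,s,t)`. -/
theorem stmt6 {V : Type*} [Fintype V] (G : SimpleGraph V) (s t : V)
    (k : ℕ) (hk : 2 ≤ k) (P : RootedPathDigraph k)
    (l : ℕ) (hl : 1 ≤ l) (i : ℕ) (hi1 : l + 1 ≤ i) (hi2 : i + 1 ≤ k)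
    (hunf : UnfoldableDeg P i l) :
    (∃ p : G.Walk s t, p.IsPath ∧ p.length ≤ l) ↔
      ∃ h : ℕ → V × ℕ, IsEmbeddingB G P (Finset.Icc (i - l) (i - 1)) s t h := by
  have hInf : sInf (↑(Finset.Icc (i - l) (i - 1)) : Set ℕ) = i - l := by
    rw [Finset.coe_Icc]; exact csInf_Icc (by omega)
  constructor
  · -- forward: path gives embedding
    rintro ⟨w, -, hlen⟩
    classical
    refine ⟨fun q => ((if q ≤ i - l then s else if i ≤ q then t
        else w.getVert (q - (i - l))), q), ?_, ?_, ?_, ?_⟩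
    · exact fun a _ b _ heq => (Prod.ext_iff.mp heq).2
    · simp only [if_pos (show (1:ℕ) ≤ i - l by omega)]
    · exact fun q hq => hq
    · intro q q' hE
      obtain ⟨j, hj1, hj2, hor⟩ := P.subset q q' hE
      have hband : ∀ r, i - l ≤ r → r ≤ i →
          (if r ≤ i - l then s else if i ≤ r then t else w.getVert (r - (i - l)))
            = w.getVert (r - (i - l)) := by
        intro r h1 h2
        by_cases hr1 : r ≤ i - l
        · have hr : r = i - l := by omega
          rw [if_pos hr1, hr, Nat.sub_self, SimpleGraph.Walk.getVert_zero]
        · rw [if_neg hr1]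
          by_cases hr2 : i ≤ r
          · have hr : r = i := by omega
            rw [if_pos hr2, hr,
              SimpleGraph.Walk.getVert_of_length_le w (show w.length ≤ i - (i - l) by omega)]
          · rw [if_neg hr2]
      rcases hor with ⟨ha, hb⟩ | ⟨ha, hb⟩
      · rw [ha, hb] at hE ⊢
        refine ⟨hE, ?_, ?_, ?_, ?_⟩ <;>
          simp only [hInf, min_eq_left (Nat.le_succ j), if_pos (Nat.le_succ j)]
        · intro hjk
          rw [if_neg (show ¬ (j + 1 ≤ i - l) by omega), if_pos (show i ≤ j + 1 by omega)]
        · intro hj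
          rw [if_pos (show j ≤ i - l by omega)]
        · intro hnot
          simp only [Finset.mem_Icc] at hnot
          rcases (show j + 1 ≤ i - l ∨ i ≤ j from by omega) with hc | hc
          · rw [if_pos (show j ≤ i - l by omega), if_pos hc]
          · rw [if_neg (show ¬ (j ≤ i - l) by omega), if_pos hc,
              if_neg (show ¬ (j + 1 ≤ i - l) by omega), if_pos (show i ≤ j + 1 by omega)]
        · intro hmem
          simp only [Finset.mem_Icc] at hmem
          rw [hband j (by omega) (by omega), hband (j + 1) (by omega) (by omega)]
          by_cases hlt : j - (i - l) < w.length
          · right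
            have := w.adj_getVert_succ hlt
            rwa [show j - (i - l) + 1 = j + 1 - (i - l) by omega] at this
          · left
            rw [SimpleGraph.Walk.getVert_of_length_le w (show w.length ≤ j - (i - l) by omega),
              SimpleGraph.Walk.getVert_of_length_le w
                (show w.length ≤ j + 1 - (i - l) by omega)]
      · rw [ha, hb] at hE ⊢
        refine ⟨hE, ?_, ?_, ?_, ?_⟩ <;>
          simp only [hInf, min_eq_right (Nat.le_succ j),
            if_neg (show ¬ (j + 1 ≤ j) by omega)]
        · intro hjk
          rw [if_neg (show ¬ (j + 1 ≤ i - l) by omega), if_pos (show i ≤ j + 1 by omega)]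
        · intro hj
          rw [if_pos (show j ≤ i - l by omega)]
        · intro hnot
          simp only [Finset.mem_Icc] at hnot
          rcases (show j + 1 ≤ i - l ∨ i ≤ j from by omega) with hc | hc
          · rw [if_pos (show j ≤ i - l by omega), if_pos hc]
          · rw [if_neg (show ¬ (j ≤ i - l) by omega), if_pos hc,
              if_neg (show ¬ (j + 1 ≤ i - l) by omega), if_pos (show i ≤ j + 1 by omega)]
        · intro hmem
          simp only [Finset.mem_Icc] at hmem
          rw [hband j (by omega) (by omega), hband (j + 1) (by omega) (by omega)]
          by_cases hlt : j - (i - l) < w.length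
          · right
            have := w.adj_getVert_succ hlt
            rwa [show j - (i - l) + 1 = j + 1 - (i - l) by omega] at this
          · left
            rw [SimpleGraph.Walk.getVert_of_length_le w (show w.length ≤ j - (i - l) by omega),
              SimpleGraph.Walk.getVert_of_length_le w
                (show w.length ≤ j + 1 - (i - l) by omega)]
  · -- backward: embedding gives path
    rintro ⟨h, hinj, h1, hrange, hedges⟩
    classical
    have hp1 : (h 1).2 = 1 := by rw [h1]
    have hg1 : (h 1).1 = s := by rw [h1]
    -- the master step lemma
    have step : ∀ q, 1 ≤ q → q + 1 ≤ k → ∃ j, 1 ≤ j ∧ j + 1 ≤ k ∧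
        (((h q).2 = j ∧ (h (q + 1)).2 = j + 1 ∧
          (j + 1 = k → (h (q + 1)).1 = t) ∧ (j = i - l → (h q).1 = s) ∧
          (j ∉ Finset.Icc (i - l) (i - 1) → (h q).1 = (h (q + 1)).1) ∧
          (j ∈ Finset.Icc (i - l) (i - 1) →
            (h q).1 = (h (q + 1)).1 ∨ G.Adj (h q).1 (h (q + 1)).1)) ∨
         ((h q).2 = j + 1 ∧ (h (q + 1)).2 = j ∧
          (j + 1 = k → (h q).1 = t) ∧ (j = i - l → (h (q + 1)).1 = s) ∧
          (j ∉ Finset.Icc (i - l) (i - 1) → (h (q + 1)).1 = (h q).1) ∧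
          (j ∈ Finset.Icc (i - l) (i - 1) →
            (h (q + 1)).1 = (h q).1 ∨ G.Adj (h (q + 1)).1 (h q).1))) := by
      intro q hq1 hq2
      rcases P.total q hq1 hq2 with hE | hE
      · have hB := hedges q (q + 1) hE
        obtain ⟨hEP, hB1, hB2, hB3, hB4⟩ := hB
        obtain ⟨j, hj1, hj2, hor⟩ := P.subset _ _ hEP
        rcases hor with ⟨ha, hb⟩ | ⟨ha, hb⟩
        · simp only [ha, hb, hInf, min_eq_left (Nat.le_succ j),
            if_pos (Nat.le_succ j)] at hB1 hB2 hB3 hB4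
          exact ⟨j, hj1, hj2, Or.inl ⟨ha, hb, hB1, hB2, hB3, hB4⟩⟩
        · simp only [ha, hb, hInf, min_eq_right (Nat.le_succ j),
            if_neg (show ¬ (j + 1 ≤ j) by omega)] at hB1 hB2 hB3 hB4
          exact ⟨j, hj1, hj2, Or.inr ⟨ha, hb, hB1, hB2, hB3, hB4⟩⟩
      · have hB := hedges (q + 1) q hE
        obtain ⟨hEP, hB1, hB2, hB3, hB4⟩ := hB
        obtain ⟨j, hj1, hj2, hor⟩ := P.subset _ _ hEP
        rcases hor with ⟨ha, hb⟩ | ⟨ha, hb⟩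
        · simp only [ha, hb, hInf, min_eq_left (Nat.le_succ j),
            if_pos (Nat.le_succ j)] at hB1 hB2 hB3 hB4
          exact ⟨j, hj1, hj2, Or.inr ⟨hb, ha, hB1, hB2, hB3, hB4⟩⟩
        · simp only [ha, hb, hInf, min_eq_right (Nat.le_succ j),
            if_neg (show ¬ (j + 1 ≤ j) by omega)] at hB1 hB2 hB3 hB4
          exact ⟨j, hj1, hj2, Or.inl ⟨hb, ha, hB1, hB2, hB3, hB4⟩⟩
    -- positions are at most q
    have hple : ∀ q, 1 ≤ q → q ≤ k → (h q).2 ≤ q := by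
      intro q
      induction q with
      | zero => omega
      | succ n ih =>
        intro _ hk'
        by_cases hn : 1 ≤ n
        · obtain ⟨j, hj1, hj2, hc⟩ := step n hn (by omega)
          have hn' := ih hn (by omega)
          rcases hc with ⟨ha, hb, -⟩ | ⟨ha, hb, -⟩ <;> omega
        · have hn0 : n = 0 := by omega
          subst hn0
          simp [hp1]
    -- parity
    have hpar : ∀ q, 1 ≤ q → q ≤ k → (h q).2 % 2 = q % 2 := by
      intro q
      induction q with
      | zero => omega
      | succ n ih =>
        intro _ hk'
        by_cases hn : 1 ≤ n
        · obtain ⟨j, hj1, hj2, hc⟩ := step n hn (by omega)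
          have hn' := ih hn (by omega)
          rcases hc with ⟨ha, hb, -⟩ | ⟨ha, hb, -⟩ <;> omega
        · have hn0 : n = 0 := by omega
          subst hn0
          simp [hp1]
    -- low positions carry component s
    have hgs : ∀ q, 1 ≤ q → q ≤ k → (h q).2 ≤ i - l → (h q).1 = s := by
      intro q
      induction q with
      | zero => omega
      | succ n ih =>
        intro _ hk' hle
        by_cases hn : 1 ≤ n
        · obtain ⟨j, hj1, hj2, hc⟩ := step n hn (by omega)
          rcases hc with ⟨ha, hb, -, -, hnotX, -⟩ | ⟨ha, hb, -, hmin, hnotX, -⟩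
          · have hjlt : j < i - l := by omega
            have := hnotX (by simp only [Finset.mem_Icc]; omega)
            rw [← this]
            exact ih hn (by omega) (by omega)
          · by_cases hjc : j = i - l
            · exact hmin hjc
            · have := hnotX (by simp only [Finset.mem_Icc]; omega)
              rw [this]
              exact ih hn (by omega) (by omega)
        · have hn0 : n = 0 := by omega
          subst hn0
          exact hg1
    -- the invariant: positions 1..(i-l) are hit exactly at the corresponding times
    have hA : ∀ q, 1 ≤ q → q ≤ k →
        (q ≤ i - l → (h q).2 = q) ∧ (i - l < q → i - l < (h q).2) := by
      intro q
      induction q using Nat.strong_induction_on with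
      | _ q ih =>
        intro hq1 hqk
        by_cases h2 : q < 2
        · have hq : q = 1 := by omega
          subst hq
          exact ⟨fun _ => hp1, fun hlt => by omega⟩
        · obtain ⟨n, rfl⟩ : ∃ n, q = n + 1 := ⟨q - 1, by omega⟩
          have hn1 : 1 ≤ n := by omega
          obtain ⟨j, hj1, hj2, hc⟩ := step n hn1 (by omega)
          have ihn := ih n (by omega) hn1 (by omega)
          constructor
          · intro hle
            have hpn : (h n).2 = n := ihn.1 (by omega)
            rcases hc with ⟨ha, hb, -⟩ | ⟨ha, hb, -⟩
            · omega
            · exfalso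
              have hjn : j = n - 1 := by omega
              have hn2 : 2 ≤ n := by omega
              have hA' := ih (n - 1) (by omega) (by omega) (by omega)
              have hp' : (h (n - 1)).2 = n - 1 := hA'.1 (by omega)
              have hg' : (h (n - 1)).1 = s :=
                hgs (n - 1) (by omega) (by omega) (by rw [hp']; omega)
              have hgq : (h (n + 1)).1 = s :=
                hgs (n + 1) (by omega) hqk (by rw [hb]; omega)
              have heq : h (n - 1) = h (n + 1) :=
                Prod.ext_iff.mpr ⟨by rw [hg', hgq], by rw [hp', hb]; omega⟩
              have := hinj (Set.mem_Icc.mpr ⟨by omega, by omega⟩)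
                (Set.mem_Icc.mpr ⟨by omega, hqk⟩) heq
              omega
          · intro hgt
            by_contra hcon
            push_neg at hcon
            have hgq : (h (n + 1)).1 = s := hgs (n + 1) (by omega) hqk hcon
            by_cases hnc : n ≤ i - l
            · -- n = i - l
              have hnc' : n = i - l := by omega
              have hpn : (h n).2 = n := ihn.1 (by omega)
              rcases hc with ⟨ha, hb, -⟩ | ⟨ha, hb, -⟩
              · omega
              · have hjn : j = n - 1 := by omega
                have hn2 : 2 ≤ n := by omega
                have hA' := ih (n - 1) (by omega) (by omega) (by omega)
                have hp' : (h (n - 1)).2 = n - 1 := hA'.1 (by omega)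
                have hg' : (h (n - 1)).1 = s :=
                  hgs (n - 1) (by omega) (by omega) (by rw [hp']; omega)
                have heq : h (n - 1) = h (n + 1) :=
                  Prod.ext_iff.mpr ⟨by rw [hg', hgq], by rw [hp', hb]; omega⟩
                have := hinj (Set.mem_Icc.mpr ⟨by omega, by omega⟩)
                  (Set.mem_Icc.mpr ⟨by omega, hqk⟩) heq
                omega
            · have hpn : i - l < (h n).2 := ihn.2 (by omega)
              -- then (h (n+1)).2 = i - l exactly
              have hval : (h (n + 1)).2 = i - l := by
                rcases hc with ⟨ha, hb, -⟩ | ⟨ha, hb, -⟩ <;> omega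
              have hA' := ih (i - l) (by omega) (by omega) (by omega)
              have hp' : (h (i - l)).2 = i - l := hA'.1 (by omega)
              have hg' : (h (i - l)).1 = s :=
                hgs (i - l) (by omega) (by omega) (by rw [hp'])
              have heq : h (i - l) = h (n + 1) :=
                Prod.ext_iff.mpr ⟨by rw [hg', hgq], by rw [hp', hval]⟩
              have := hinj (Set.mem_Icc.mpr ⟨by omega, by omega⟩)
                (Set.mem_Icc.mpr ⟨by omega, hqk⟩) heq
              omega
    -- the unfoldable edge maps identically
    have key : (h i).2 = i ∧ (h (i + 1)).2 = i + 1 ∧ (h i).1 = (h (i + 1)).1 := by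
      obtain ⟨j, hj1, hj2, hc⟩ := step i (by omega) hi2
      have hAi := (hA i (by omega) (by omega)).2 (by omega)
      have hAi1 := (hA (i + 1) (by omega) hi2).2 (by omega)
      have hplei := hple i (by omega) (by omega)
      have hpari := hpar i (by omega) (by omega)
      have hpari1 := hpar (i + 1) (by omega) hi2
      rcases hc with ⟨ha, hb, -, -, hnotX, -⟩ | ⟨ha, hb, -, -, -, -⟩
      · by_cases hm : (h i).2 = i
        · have hji : j = i := by omega
          subst hji
          refine ⟨hm, by omega, ?_⟩
          exact hnotX (by simp only [Finset.mem_Icc]; omega)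
        · exfalso
          refine hunf.2 (i - j) (by omega) (by omega) ?_
          rw [show i - (i - j) = j by omega]
          left
          refine ⟨Nat.even_iff.mpr (by omega), ?_, ?_, fun hone => by omega⟩
          · intro hEf
            have := (hedges i (i + 1) hEf).1
            rwa [ha, hb] at this
          · intro hEb
            have := (hedges (i + 1) i hEb).1
            rwa [ha, hb] at this
      · exfalso
        refine hunf.2 (i - j) (by omega) (by omega) ?_
        rw [show i - (i - j) = j by omega]
        right
        refine ⟨Nat.odd_iff.mpr (by omega), ?_, ?_, by omega⟩
        · intro hEf
          have := (hedges i (i + 1) hEf).1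
          rwa [ha, hb] at this
        · intro hEb
          have := (hedges (i + 1) i hEb).1
          rwa [ha, hb] at this
    -- positions in the band are straight
    have hband : ∀ d, d ≤ l → (h (i - d)).2 = i - d := by
      intro d
      induction d with
      | zero => intro _; simpa using key.1
      | succ d ihd =>
        intro hd
        have hprev := ihd (by omega)
        obtain ⟨j, hj1, hj2, hc⟩ := step (i - (d + 1)) (by omega) (by omega)
        rw [show i - (d + 1) + 1 = i - d by omega] at hc
        have hlow := hple (i - (d + 1)) (by omega) (by omega)
        rcases hc with ⟨ha, hb, -⟩ | ⟨ha, hb, -⟩ <;> omega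
    have hpq : ∀ q, i - l ≤ q → q ≤ i → (h q).2 = q := by
      intro q hq1 hq2
      have := hband (i - q) (by omega)
      rwa [show i - (i - q) = q by omega] at this
    -- above i everything is straight with constant component
    have htop : ∀ q, i ≤ q → q ≤ k → (h q).2 = q ∧ (h q).1 = (h i).1 := by
      intro q
      induction q using Nat.strong_induction_on with
      | _ q ih =>
        intro hiq hqk
        rcases Nat.eq_or_lt_of_le hiq with heq | hlt
        · rw [← heq]
          exact ⟨key.1, rfl⟩
        · obtain ⟨n, rfl⟩ : ∃ n, q = n + 1 := ⟨q - 1, by omega⟩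
          have hin : i ≤ n := by omega
          have ihn := ih n (by omega) hin (by omega)
          obtain ⟨j, hj1, hj2, hc⟩ := step n (by omega) (by omega)
          rcases hc with ⟨ha, hb, -, -, hnotX, -⟩ | ⟨ha, hb, -, -, hnotX, -⟩
          · refine ⟨by omega, ?_⟩
            have := hnotX (by simp only [Finset.mem_Icc]; omega)
            rw [← this]
            exact ihn.2
          · exfalso
            rcases Nat.eq_or_lt_of_le hin with heqn | hltn
            · rw [← heqn] at hb
              have := key.2.1
              omega
            · have hgeq : (h (n + 1)).1 = (h n).1 :=
                hnotX (by simp only [Finset.mem_Icc]; omega)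
              have ihn1 := ih (n - 1) (by omega) (by omega) (by omega)
              have heq2 : h (n - 1) = h (n + 1) :=
                Prod.ext_iff.mpr ⟨by rw [ihn1.2, hgeq, ihn.2],
                  by rw [ihn1.1, hb]; omega⟩
              have := hinj (Set.mem_Icc.mpr ⟨by omega, by omega⟩)
                (Set.mem_Icc.mpr ⟨by omega, hqk⟩) heq2
              omega
    -- the top component is t
    have hgt : (h i).1 = t := by
      have hk1 := htop (k - 1) (by omega) (by omega)
      have hkk := htop k (by omega) le_rfl
      obtain ⟨j, hj1, hj2, hc⟩ := step (k - 1) (by omega) (by omega)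
      rw [show k - 1 + 1 = k by omega] at hc
      rcases hc with ⟨ha, hb, hT, -⟩ | ⟨ha, hb, -⟩
      · have : (h k).1 = t := hT (by omega)
        rw [← hkk.2, this]
      · omega
    have hgc : (h (i - l)).1 = s :=
      hgs (i - l) (by omega) (by omega) (by rw [hpq (i - l) le_rfl (by omega)])
    -- the chain in the band
    have hchain : ∀ q, i - l ≤ q → q < i - l + l →
        (h q).1 = (h (q + 1)).1 ∨ G.Adj (h q).1 (h (q + 1)).1 := by
      intro q hq1 hq2
      obtain ⟨j, hj1, hj2, hc⟩ := step q (by omega) (by omega)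
      have hq := hpq q hq1 (by omega)
      have hq' := hpq (q + 1) (by omega) (by omega)
      rcases hc with ⟨ha, hb, -, -, -, hX⟩ | ⟨ha, hb, -⟩
      · have hjq : j = q := by omega
        subst hjq
        exact hX (by simp only [Finset.mem_Icc]; omega)
      · exfalso; omega
    obtain ⟨w0, hw0⟩ := chainWalk G (fun q => (h q).1) l (i - l) hchain
    have hil : i - l + l = i := by omega
    have hgit : (h (i - l + l)).1 = t := by rw [hil]; exact hgt
    refine ⟨(w0.copy hgc hgit).bypass, SimpleGraph.Walk.bypass_isPath _, ?_⟩
    exact le_trans (SimpleGraph.Walk.length_bypass_le _)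
      (by rw [SimpleGraph.Walk.length_copy]; exact hw0)
end

section
/- Let S be a finite set, let σ : S → S be a bijection, let m ≥ 1, let c ∈ ℕ, and let T_1, …, T_m be subsets of S. Call an index i ∈ {2,…,m} unfoldable if T_i is not a subset of σ(T_{i−1}) (where σ(T) denotes the image of T under σ), and call i critical if T_i ≠ σ(T_{i−1}). If at most c indices in {2,…,m} are unfoldable, then at most c + |S|·(c+1) indices in {2,…,m} are critical. -/
open Finset

section Amortised

variable {f : ℕ → ℕ} {N : ℕ} {jump drop : ℕ → Prop} [DecidablePred jump] [DecidablePred drop]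

/-- The potential `#drops + f m` rises by at most `N` at a jump and does not rise elsewhere,
since a drop that is not a jump lowers `f` by at least one. -/
theorem card_filter_drop_and_not_add_le (hf : ∀ i, f i ≤ N)
    (hmono : ∀ k, ¬ jump k → f k ≤ f (k - 1))
    (hdrop : ∀ k, drop k → ¬ jump k → f k < f (k - 1)) (m : ℕ) :
    #{k ∈ Icc 2 m | drop k ∧ ¬ jump k} + f m ≤ N * (#{k ∈ Icc 2 m | jump k} + 1) := by
  induction m with
  | zero => simpa using hf 0
  | succ m ih =>
    rcases Nat.eq_zero_or_pos m with rfl | hm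
    · simpa using hf 1
    have hnew : m + 1 ∉ Icc 2 m := by simp
    rw [← insert_Icc_right_eq_Icc_add_one (by omega), filter_insert, filter_insert]
    have hmono' := hmono (m + 1)
    have hdrop' := hdrop (m + 1)
    have hfm := hf (m + 1)
    simp only [add_tsub_cancel_right] at hmono' hdrop'
    by_cases hj : jump (m + 1) <;> by_cases hd : drop (m + 1) <;>
      simp only [hj, hd, not_true_eq_false, not_false_eq_true, and_true, and_false, if_true,
        if_false, true_implies, card_insert_of_notMem (hnew ∘ And.left ∘ mem_filter.mp)]
        at hmono' hdrop' ⊢ <;>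
      nlinarith

theorem card_filter_drop_le (hf : ∀ i, f i ≤ N)
    (hmono : ∀ k, ¬ jump k → f k ≤ f (k - 1))
    (hdrop : ∀ k, drop k → ¬ jump k → f k < f (k - 1)) (m : ℕ) :
    #{k ∈ Icc 2 m | drop k} ≤ #{k ∈ Icc 2 m | jump k} + N * (#{k ∈ Icc 2 m | jump k} + 1) := by
  have hsplit : {k ∈ Icc 2 m | drop k} ⊆
      {k ∈ Icc 2 m | jump k} ∪ {k ∈ Icc 2 m | drop k ∧ ¬ jump k} := by
    intro k
    simp only [mem_union, mem_filter]
    tauto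
  have := card_filter_drop_and_not_add_le hf hmono hdrop m
  have := (card_le_card hsplit).trans (card_union_le _ _)
  omega

end Amortised

theorem Set.ncard_le_ncard_of_subset_image {α β : Type*} [Finite β] {f : α → β}
    (hf : Function.Injective f) {s : Set β} {t : Set α} (h : s ⊆ f '' t) :
    s.ncard ≤ t.ncard :=
  (Set.ncard_le_ncard h).trans_eq (Set.ncard_image_of_injective t hf)

theorem Set.ncard_lt_ncard_of_subset_image {α β : Type*} [Finite β] {f : α → β}
    (hf : Function.Injective f) {s : Set β} {t : Set α} (h : s ⊆ f '' t) (hne : s ≠ f '' t) :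
    s.ncard < t.ncard :=
  (Set.ncard_lt_ncard (h.ssubset_of_ne hne)).trans_eq (Set.ncard_image_of_injective t hf)

theorem Finset.card_filter_Icc_eq_ncard {P : ℕ → Prop} [DecidablePred P] (a b : ℕ) :
    #{i ∈ Icc a b | P i} = {i | i ∈ Set.Icc a b ∧ P i}.ncard := by
  rw [← Set.ncard_coe_finset, coe_filter]
  simp only [mem_Icc, Set.mem_Icc]

theorem stmt8_general {S : Type*} [Fintype S] (σ : S → S) (hσ : Function.Bijective σ)
    (m : ℕ) (c : ℕ) (T : ℕ → Set S)
    (hunf : {i | i ∈ Set.Icc 2 m ∧ ¬ T i ⊆ σ '' T (i - 1)}.ncard ≤ c) :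
    {i | i ∈ Set.Icc 2 m ∧ T i ≠ σ '' T (i - 1)}.ncard ≤
      c + Fintype.card S * (c + 1) := by
  classical
  rw [← card_filter_Icc_eq_ncard] at hunf ⊢
  have hcritical := card_filter_drop_le (f := fun i => (T i).ncard)
    (jump := fun k => ¬ T k ⊆ σ '' T (k - 1)) (drop := fun k => T k ≠ σ '' T (k - 1))
    (fun i => (Set.ncard_le_card (T i)).trans_eq Nat.card_eq_fintype_card)
    (fun k hk => Set.ncard_le_ncard_of_subset_image hσ.injective (not_not.mp hk))
    (fun k hne hk => Set.ncard_lt_ncard_of_subset_image hσ.injective (not_not.mp hk) hne) m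
  exact hcritical.trans (by gcongr)

/-- Claim 5 in the proof of Lemma 4.2, in abstract form: let `σ : S → S` be a
bijection of a finite set and `T_1,…,T_m ⊆ S`. If at most `c` indices
`i ∈ {2,…,m}` are unfoldable (`T_i ⊄ σ(T_{i−1})`), then at most
`c + |S|·(c+1)` indices in `{2,…,m}` are critical (`T_i ≠ σ(T_{i−1})`). -/
theorem stmt8 {S : Type*} [Fintype S] (σ : S → S) (hσ : Function.Bijective σ)
    (m : ℕ) (hm : 1 ≤ m) (c : ℕ) (T : ℕ → Set S)
    (hunf : {i | i ∈ Set.Icc 2 m ∧ ¬ T i ⊆ σ '' T (i - 1)}.ncard ≤ c) :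
    {i | i ∈ Set.Icc 2 m ∧ T i ≠ σ '' T (i - 1)}.ncard ≤
      c + Fintype.card S * (c + 1) :=
  stmt8_general σ hσ m c T hunf
end

section
/- Let S be a set, let σ : S → S be a bijection, let m ≥ 1, let T_1, …, T_m be subsets of S, let d ∈ ℕ, and let a ∈ {1,…,m}. Assume: (H1) for every i with d+2 ≤ i ≤ m there exists ℓ ∈ {1,…,d+1} such that T_i ⊆ σ^ℓ(T_{i−ℓ}), where σ^ℓ denotes the ℓ-fold composition of σ and σ^ℓ(T) the image of T under σ^ℓ; and (H2) for every i with a+1 ≤ i ≤ min(a+d, m), T_i ⊆ σ(T_{i−1}). Then for every i with 0 ≤ i ≤ m−a, T_{a+i} ⊆ σ^i(T_a). -/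
/-!
Every `T_{a+i}` with `0 < i` is contained in a `σ^l`-image of an earlier set `T_{a+i-l}` with
`1 ≤ l ≤ i`: for `i ≤ d` take `l = 1` from (H2), and for `i > d` take the `l ≤ d + 1 ≤ i`
given by (H1). Chaining these inclusions back to `T_a` by strong induction, the exponents add
up to exactly `i`.
-/

theorem Set.subset_image_iterate_of_forall_exists_subset_image_iterate {α : Type*}
    (f : α → α) (U : ℕ → Set α) (n : ℕ)
    (hU : ∀ i, 0 < i → i ≤ n → ∃ l, 0 < l ∧ l ≤ i ∧ U i ⊆ f^[l] '' U (i - l)) :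
    ∀ i ≤ n, U i ⊆ f^[i] '' U 0 := by
  intro i
  induction i using Nat.strong_induction_on with
  | _ i ih =>
    intro hin
    rcases Nat.eq_zero_or_pos i with rfl | hi
    · simp
    obtain ⟨l, hl, hli, hsub⟩ := hU i hi hin
    calc U i ⊆ f^[l] '' U (i - l) := hsub
      _ ⊆ f^[l] '' (f^[i - l] '' U 0) := Set.image_mono (ih (i - l) (by omega) (by omega))
      _ = f^[i] '' U 0 := by
        rw [← Set.image_comp, ← Function.iterate_add, Nat.add_sub_cancel' hli]

theorem stmt9_general {S : Type*} (σ : S → S)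
    (m : ℕ) (T : ℕ → Set S) (d a : ℕ)
    (ha1 : 1 ≤ a)
    (H1 : ∀ i, d + 2 ≤ i → i ≤ m →
      ∃ l, 1 ≤ l ∧ l ≤ d + 1 ∧ T i ⊆ σ^[l] '' T (i - l))
    (H2 : ∀ i, a + 1 ≤ i → i ≤ min (a + d) m → T i ⊆ σ '' T (i - 1)) :
    ∀ i, i ≤ m - a → T (a + i) ⊆ σ^[i] '' T a := by
  refine Set.subset_image_iterate_of_forall_exists_subset_image_iterate σ (fun i ↦ T (a + i))
    (m - a) fun i hi him ↦ ?_
  by_cases hid : i ≤ d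
  · refine ⟨1, one_pos, hi, ?_⟩
    simpa [show a + i - 1 = a + (i - 1) by omega] using
      H2 (a + i) (by omega) (le_min (by omega) (by omega))
  · obtain ⟨l, hl, hld, hsub⟩ := H1 (a + i) (by omega) (by omega)
    exact ⟨l, hl, by omega, by simpa [show a + i - l = a + (i - l) by omega] using hsub⟩

/-- Claim 6 in the proof of Lemma 4.2, in abstract form: let `σ : S → S` be a
bijection and `T_1,…,T_m ⊆ S`. Assume (H1) for every `i` with `d+2 ≤ i ≤ m` there
is `l ∈ {1,…,d+1}` with `T_i ⊆ σ^l(T_{i−l})`, and (H2) `T_i ⊆ σ(T_{i−1})` for all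
`i` with `a+1 ≤ i ≤ min(a+d, m)`. Then `T_{a+i} ⊆ σ^i(T_a)` for all `0 ≤ i ≤ m−a`. -/
theorem stmt9 {S : Type*} (σ : S → S) (hσ : Function.Bijective σ)
    (m : ℕ) (hm : 1 ≤ m) (T : ℕ → Set S) (d a : ℕ)
    (ha1 : 1 ≤ a) (ha2 : a ≤ m)
    (H1 : ∀ i, d + 2 ≤ i → i ≤ m →
      ∃ l, 1 ≤ l ∧ l ≤ d + 1 ∧ T i ⊆ σ^[l] '' T (i - l))
    (H2 : ∀ i, a + 1 ≤ i → i ≤ min (a + d) m → T i ⊆ σ '' T (i - 1)) :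
    ∀ i, i ≤ m - a → T (a + i) ⊆ σ^[i] '' T a :=
  stmt9_general σ m T d a ha1 H1 H2
end

section
/- Let P be a rooted path digraph on k vertices with k ≥ 3 such that for every i with 0 ≤ i ≤ k−3 the inclusion atyp(e_{2+i}) ⊆ atyp(e_2^{−i}) holds. Let B = (W, R, E_B) be a rooted digraph structure, let b₁ ∈ W, let f : W → {2,…,k}, and let s ∈ W ∖ {b₁} with f(s) = 2. If the graph G(f,b₁) contains a path of length k−2 with endpoint s, then there exists an embedding of P into B. -/
/-- An embedding of the rooted path digraph `P` into a rooted digraph structure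
`B = (W, R, E_B)`: an injective map `h : {1,…,k} → W` with `h(1) ∈ R` respecting all
edges of `P`. -/
def IsEmbeddingInto {W : Type*} {k : ℕ} (P : RootedPathDigraph k)
    (R : Set W) (EB : W → W → Prop) (h : ℕ → W) : Prop :=
  Set.InjOn h (Set.Icc 1 k) ∧ h 1 ∈ R ∧
  ∀ i, 1 ≤ i → i + 1 ≤ k →
    (P.EP i (i + 1) → EB (h i) (h (i + 1))) ∧ (P.EP (i + 1) i → EB (h (i + 1)) (h i))

/-- The base relation of the graph `G(f,b₁)` from the proof of Lemma 4.2 (Claim 7):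
`b, b'` range over `W ∖ {b₁}`, `f(b) + 1 = f(b')`, the `E_B`-edges required by the
orientation of `e₂` (in the direction given by the parity of `f(b)`) are present,
and if `f(b) = 2` then `b₁` is a root and the `E_B`-edges required by `e₁` between
`b₁` and `b` are present. -/
def GfbBase {W : Type*} {k : ℕ} (P : RootedPathDigraph k) (R : Set W)
    (EB : W → W → Prop) (b₁ : W) (f : W → ℕ) (b b' : W) : Prop :=
  b ≠ b₁ ∧ b' ≠ b₁ ∧ f b + 1 = f b' ∧
  (Even (f b) → (P.EP 2 3 → EB b b') ∧ (P.EP 3 2 → EB b' b)) ∧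
  (¬ Even (f b) → (P.EP 2 3 → EB b' b) ∧ (P.EP 3 2 → EB b b')) ∧
  (f b = 2 → b₁ ∈ R ∧ (P.EP 1 2 → EB b₁ b) ∧ (P.EP 2 1 → EB b b₁))

/-- The undirected graph `G(f,b₁)`: the symmetric closure of `GfbBase`. -/
def Gfb {W : Type*} {k : ℕ} (P : RootedPathDigraph k) (R : Set W)
    (EB : W → W → Prop) (b₁ : W) (f : W → ℕ) : SimpleGraph W :=
  SimpleGraph.fromRel (GfbBase P R EB b₁ f)

lemma getVert_injOn_aux {V : Type*} {G : SimpleGraph V} :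
    ∀ {u v : V} (p : G.Walk u v), p.IsPath → ∀ i j, i ≤ p.length → j ≤ p.length →
      p.getVert i = p.getVert j → i = j := by
  intro u v p
  induction p with
  | nil => intro _ i j hi hj _; simp at hi hj; omega
  | cons h q ih =>
    intro hp i j hi hj heq
    rw [SimpleGraph.Walk.cons_isPath_iff] at hp
    match i, j with
    | 0, 0 => rfl
    | 0, j+1 =>
      exfalso
      apply hp.2
      rw [SimpleGraph.Walk.mem_support_iff_exists_getVert]
      refine ⟨j, ?_, ?_⟩
      · rw [← SimpleGraph.Walk.getVert_cons_succ q h, ← heq, SimpleGraph.Walk.getVert_zero]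
      · simpa using hj
    | i+1, 0 =>
      exfalso
      apply hp.2
      rw [SimpleGraph.Walk.mem_support_iff_exists_getVert]
      refine ⟨i, ?_, ?_⟩
      · rw [← SimpleGraph.Walk.getVert_cons_succ q h, heq, SimpleGraph.Walk.getVert_zero]
      · simpa using hi
    | i+1, j+1 =>
      simp only [SimpleGraph.Walk.getVert_cons_succ] at heq
      have := ih hp.1 i j (by simpa using hi) (by simpa using hj) heq
      omega

/-- Claim 7 in the proof of Lemma 4.2: if `atyp(e_{2+i}) ⊆ atyp(e_2^{−i})` for all
`0 ≤ i ≤ k−3`, `f : W → {2,…,k}`, and the graph `G(f,b₁)` contains a path of length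
`k−2` with endpoint `s` where `f(s) = 2` and `s ≠ b₁`, then `P` embeds into
`B = (W, R, E_B)`. -/
theorem stmt10 {W : Type*} (k : ℕ) (hk : 3 ≤ k) (P : RootedPathDigraph k)
    (hP : ∀ i, i + 3 ≤ k → atypSub P (2 + i) 2 i)
    (R : Set W) (EB : W → W → Prop) (b₁ : W)
    (f : W → ℕ) (hf : ∀ w, f w ∈ Set.Icc 2 k)
    (s : W) (hs : s ≠ b₁) (hfs : f s = 2)
    (hpath : ∃ v, ∃ p : (Gfb P R EB b₁ f).Walk s v, p.IsPath ∧ p.length = k - 2) :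
    ∃ h : ℕ → W, IsEmbeddingInto P R EB h := by
  obtain ⟨v, p, hp, hl⟩ := hpath
  set n := p.length with hn
  have hn1 : 1 ≤ n := by omega
  set w : ℕ → W := p.getVert with hw
  have hw0 : w 0 = s := p.getVert_zero
  -- adjacency along the path
  have hadj : ∀ i, i < n → GfbBase P R EB b₁ f (w i) (w (i + 1)) ∨
      GfbBase P R EB b₁ f (w (i + 1)) (w i) := by
    intro i hi
    have := p.adj_getVert_succ hi
    simp only [Gfb, SimpleGraph.fromRel_adj] at this
    exact this.2
  -- parity of f along the path
  have hpar : ∀ i, i ≤ n → f (w i) % 2 = i % 2 := by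
    intro i
    induction i with
    | zero => intro _; rw [hw0, hfs]
    | succ i ih =>
      intro hi
      have h1 := ih (by omega)
      rcases hadj i (by omega) with h2 | h2
      · have := h2.2.2.1; omega
      · have := h2.2.2.1; omega
  -- path vertices avoid b₁
  have hnb : ∀ i, i ≤ n → w i ≠ b₁ := by
    intro i hi
    rcases Nat.lt_or_ge i n with h | h
    · rcases hadj i h with h2 | h2
      · exact h2.1
      · exact h2.2.1
    · have hin : i = n := by omega
      rcases hadj (n - 1) (by omega) with h2 | h2
      · have : n - 1 + 1 = i := by omega
        rw [this] at h2; exact h2.2.1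
      · have : n - 1 + 1 = i := by omega
        rw [this] at h2; exact h2.1
  -- the edge lemma
  have hedge : ∀ i, i + 1 ≤ n →
      (P.EP (2 + i) (2 + i + 1) → EB (w i) (w (i + 1))) ∧
      (P.EP (2 + i + 1) (2 + i) → EB (w (i + 1)) (w i)) := by
    intro i hi
    have hPi := hP i (by omega)
    have hpi := hpar i (by omega)
    have hpi1 := hpar (i + 1) (by omega)
    rcases hadj i (by omega) with h2 | h2
    · -- up step : f (w i) parity = i parity
      rcases hPi with ⟨hev, hA, hB, _⟩ | ⟨hod, hA, hB, _⟩
      · have hfe : Even (f (w i)) := by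
          rw [Nat.even_iff]; rw [Nat.even_iff] at hev; omega
        exact ⟨fun h => (h2.2.2.2.1 hfe).1 (hA h), fun h => (h2.2.2.2.1 hfe).2 (hB h)⟩
      · have hfe : ¬ Even (f (w i)) := by
          rw [Nat.even_iff]; rw [Nat.odd_iff] at hod; omega
        exact ⟨fun h => (h2.2.2.2.2.1 hfe).2 (hA h), fun h => (h2.2.2.2.2.1 hfe).1 (hB h)⟩
    · -- down step : f (w (i+1)) parity = (i+1) parity
      rcases hPi with ⟨hev, hA, hB, _⟩ | ⟨hod, hA, hB, _⟩
      · have hfe : ¬ Even (f (w (i + 1))) := by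
          rw [Nat.even_iff]; rw [Nat.even_iff] at hev; omega
        exact ⟨fun h => (h2.2.2.2.2.1 hfe).1 (hA h), fun h => (h2.2.2.2.2.1 hfe).2 (hB h)⟩
      · have hfe : Even (f (w (i + 1))) := by
          rw [Nat.even_iff]; rw [Nat.odd_iff] at hod; omega
        exact ⟨fun h => (h2.2.2.2.1 hfe).2 (hA h), fun h => (h2.2.2.2.1 hfe).1 (hB h)⟩
  -- root lemma
  have hroot : b₁ ∈ R ∧ (P.EP 1 2 → EB b₁ s) ∧ (P.EP 2 1 → EB s b₁) := by
    rcases hadj 0 (by omega) with h2 | h2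
    · rw [hw0] at h2
      exact h2.2.2.2.2.2 hfs
    · exfalso
      have hx : f (w 1) + 1 = f (w 0) := h2.2.2.1
      rw [hw0, hfs] at hx
      have h3 := (hf (w 1)).1
      omega
  refine ⟨fun i => if i = 1 then b₁ else w (i - 2), ?_, ?_, ?_⟩
  · intro a ha b hb heq
    simp only [Set.mem_Icc] at ha hb
    by_cases ha1 : a = 1
    · by_cases hb1 : b = 1
      · rw [ha1, hb1]
      · simp only [if_pos ha1, if_neg hb1] at heq
        exact absurd heq.symm (hnb (b - 2) (by omega))
    · by_cases hb1 : b = 1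
      · simp only [if_neg ha1, if_pos hb1] at heq
        exact absurd heq (hnb (a - 2) (by omega))
      · simp only [if_neg ha1, if_neg hb1] at heq
        have := getVert_injOn_aux p hp (a - 2) (b - 2) (by omega) (by omega) heq
        omega
  · simpa using hroot.1
  · intro i hi1 hik
    by_cases hi : i = 1
    · subst hi
      constructor
      · intro h
        simpa [hw0] using hroot.2.1 h
      · intro h
        simpa [hw0] using hroot.2.2 h
    · have hii : i - 2 + 1 ≤ n := by omega
      have he := hedge (i - 2) hii
      have e1 : 2 + (i - 2) = i := by omega
      rw [e1] at he
      have e3 : i - 2 + 1 = i + 1 - 2 := by omega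
      rw [e3] at he
      simp only [if_neg hi, if_neg (by omega : i + 1 ≠ 1)]
      exact he
end

section
/- Let m ≥ 1, c ≥ 1, and let d : {1,…,m} → {0,1}. For i ∈ {1,…,m} and g ∈ ℕ, say that i is unfoldable of degree g if i > g and for every ℓ ∈ {1,…,g}: d(i) = d(i−ℓ) when ℓ is odd, and d(i) ≠ d(i−ℓ) when ℓ is even. Let deg(i) be the largest g such that i is unfoldable of degree g (every i is unfoldable of degree 0, so deg(i) is well defined and deg(i) < i). If there exists i with max(c,2) ≤ i ≤ m and d(i) = d(i−1), then the sum of deg(i) over i ∈ {1,…,m} is at least c−1. -/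
/-- `i` is unfoldable of degree `g` for the edge-direction sequence `d`: `i > g` and
for every `l ∈ {1,…,g}`, `d(i) = d(i−l)` when `l` is odd and `d(i) ≠ d(i−l)` when
`l` is even. -/
def UnfDeg (d : ℕ → Bool) (i g : ℕ) : Prop :=
  g < i ∧ ∀ l, 1 ≤ l → l ≤ g →
    (Odd l → d i = d (i - l)) ∧ (Even l → d i ≠ d (i - l))

/-- `deg d i` is the largest `g` such that `i` is unfoldable of degree `g`. -/
noncomputable def deg (d : ℕ → Bool) (i : ℕ) : ℕ :=
  sSup {g | UnfDeg d i g}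

lemma deg_ge (d : ℕ → Bool) (i g : ℕ) (h : UnfDeg d i g) : g ≤ deg d i :=
  le_csSup ⟨i, fun _ hg => le_of_lt hg.1⟩ h

lemma alt_lemma (d : ℕ → Bool) (i j : ℕ) (hj : 1 ≤ j) (hji : j < i)
    (h1 : d i = d (i - 1))
    (halt : ∀ l, j < l → l < i → d l ≠ d (l - 1)) :
    UnfDeg d i (i - j) := by
  refine ⟨by omega, ?_⟩
  intro l hl1 hl2
  induction l with
  | zero => omega
  | succ l ih =>
    rcases Nat.eq_or_lt_of_le hl1 with h | h
    · constructor
      · intro _; simpa [← h] using h1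
      · intro he; rw [← h] at he; exact absurd he Nat.not_even_one
    · have hl : 1 ≤ l := by omega
      have ihl := ih hl (by omega)
      have hne : d (i - l) ≠ d (i - (l + 1)) := by
        have := halt (i - l) (by omega) (by omega)
        have : d (i - l) ≠ d (i - l - 1) := this
        simpa [Nat.sub_sub] using this
      constructor
      · intro ho
        have he : Even l := Nat.not_odd_iff_even.mp (Nat.odd_add_one.mp ho)
        have := ihl.2 he
        cases hdi : d i <;> cases hdl : d (i - l) <;> cases hdl1 : d (i - (l+1)) <;>
          simp_all
      · intro he
        have ho : Odd l := Nat.not_even_iff_odd.mp (Nat.even_add_one.mp he)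
        have := ihl.1 ho
        cases hdi : d i <;> cases hdl : d (i - l) <;> cases hdl1 : d (i - (l+1)) <;>
          simp_all

lemma key (d : ℕ → Bool) : ∀ i, 2 ≤ i → d i = d (i - 1) →
    i - 1 ≤ ∑ j ∈ Finset.Icc 1 i, deg d j := by
  intro i
  induction i using Nat.strong_induction_on with
  | _ i ih =>
    intro hi2 hdi
    by_cases hrep : ∃ j, 2 ≤ j ∧ j < i ∧ d j = d (j - 1)
    · obtain ⟨j, hj2, hji, hdj⟩ := hrep
      classical
      set k := Nat.findGreatest (fun j => 2 ≤ j ∧ d j = d (j - 1)) (i - 1) with hk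
      have hkspec : 2 ≤ k ∧ d k = d (k - 1) :=
        Nat.findGreatest_spec (P := fun j => 2 ≤ j ∧ d j = d (j - 1)) (m := j) (by omega) ⟨hj2, hdj⟩
      have hkle : k ≤ i - 1 := Nat.findGreatest_le _
      have hkmax : ∀ l, k < l → l ≤ i - 1 → ¬ (2 ≤ l ∧ d l = d (l - 1)) := by
        intro l hkl hli
        exact Nat.findGreatest_is_greatest hkl hli
      have halt : ∀ l, k < l → l < i → d l ≠ d (l - 1) := by
        intro l hkl hli hdl
        exact hkmax l hkl (by omega) ⟨by omega, hdl⟩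
      have hunf : UnfDeg d i (i - k) := alt_lemma d i k (by omega) (by omega) hdi halt
      have hdeg : i - k ≤ deg d i := deg_ge d i _ hunf
      have hsumk : k - 1 ≤ ∑ j ∈ Finset.Icc 1 k, deg d j :=
        ih k (by omega) hkspec.1 hkspec.2
      have hsub : insert i (Finset.Icc 1 k) ⊆ Finset.Icc 1 i := by
        intro x hx
        simp only [Finset.mem_insert, Finset.mem_Icc] at hx ⊢
        omega
      have hnotmem : i ∉ Finset.Icc 1 k := by
        simp only [Finset.mem_Icc]; omega
      calc i - 1 = (i - k) + (k - 1) := by omega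
        _ ≤ deg d i + ∑ j ∈ Finset.Icc 1 k, deg d j := Nat.add_le_add hdeg hsumk
        _ = ∑ j ∈ insert i (Finset.Icc 1 k), deg d j := (Finset.sum_insert hnotmem).symm
        _ ≤ ∑ j ∈ Finset.Icc 1 i, deg d j :=
            Finset.sum_le_sum_of_subset hsub
    · push_neg at hrep
      have halt : ∀ l, 1 < l → l < i → d l ≠ d (l - 1) := by
        intro l h1 h2 hdl
        exact (hrep l (by omega) h2) hdl
      have hunf : UnfDeg d i (i - 1) := alt_lemma d i 1 le_rfl (by omega) hdi halt
      have hdeg : i - 1 ≤ deg d i := deg_ge d i _ hunf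
      refine hdeg.trans (Finset.single_le_sum (f := deg d) (fun _ _ => Nat.zero_le _) ?_)
      simp only [Finset.mem_Icc]; omega

/-- Combinatorial core of the hardness direction of Theorem 5.1: if a rooted
oriented path, encoded by the direction sequence `d` of its `m` edges, does not
have a `c`-alternating tail (i.e. some `i` with `max c 2 ≤ i ≤ m` has
`d(i) = d(i−1)`), then its unfoldability degree `∑ deg(i)` is at least `c−1`. -/
theorem stmt12 (m c : ℕ) (hm : 1 ≤ m) (hc : 1 ≤ c) (d : ℕ → Bool)
    (hex : ∃ i, max c 2 ≤ i ∧ i ≤ m ∧ d i = d (i - 1)) :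
    c - 1 ≤ ∑ i ∈ Finset.Icc 1 m, deg d i := by
  obtain ⟨i, hci, him, hdi⟩ := hex
  have h2 : 2 ≤ i := le_trans (le_max_right _ _) hci
  have hkey := key d i h2 hdi
  have hsub : Finset.Icc 1 i ⊆ Finset.Icc 1 m := by
    intro x hx; simp only [Finset.mem_Icc] at hx ⊢; omega
  have := Finset.sum_le_sum_of_subset (f := deg d) hsub
  have hci' : c ≤ i := le_trans (le_max_left _ _) hci
  omega
end

section
/- Let P be a rooted oriented path on k vertices with a C-alternating tail, where 1 ≤ C < k, and let B = (W, R, E_B) be a rooted digraph structure. Then the following are equivalent: (i) there exist a function f : W → {C,…,k} and an embedding h of P↓C into B such that the graph G(f,h) contains a path of length k−C one of whose endpoints lies in f^{−1}(C); (ii) there exists an embedding of P into B. -/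
/-- An embedding of `P↓C` (the initial segment of `P` on `{1,…,C}`) into
`B = (W, R, E_B)`. -/
def IsEmbeddingDown {W : Type*} {k : ℕ} (P : RootedPathDigraph k)
    (R : Set W) (EB : W → W → Prop) (C : ℕ) (h : ℕ → W) : Prop :=
  Set.InjOn h (Set.Icc 1 C) ∧ h 1 ∈ R ∧
  ∀ i, 1 ≤ i → i + 1 ≤ C →
    (P.EP i (i + 1) → EB (h i) (h (i + 1))) ∧ (P.EP (i + 1) i → EB (h (i + 1)) (h i))

/-- The undirected graph `G(f,h)` from the proof of Theorem 5.1: vertex set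
`W ∖ {h(1),…,h(C−1)}`, adjacency the symmetric closure of the set of pairs
`(b,b') ∈ E_B` with `|f(b) − f(b')| = 1`, `(f(b), f(b')) ∈ E_P`, and such that a
vertex with `f`-value `C` must be `h(C)`. -/
def Gfh {W : Type*} {k : ℕ} (P : RootedPathDigraph k) (EB : W → W → Prop)
    (C : ℕ) (h : ℕ → W) (f : W → ℕ) : SimpleGraph W :=
  SimpleGraph.fromRel (fun b b' =>
    (∀ j, 1 ≤ j → j + 1 ≤ C → b ≠ h j ∧ b' ≠ h j) ∧
    EB b b' ∧ (f b + 1 = f b' ∨ f b' + 1 = f b) ∧ P.EP (f b) (f b') ∧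
    (f b = C → b = h C) ∧ (f b' = C → b' = h C))
/-!
Along a path `x₀ x₁ … x_{k-C}` of `G(f,h)` starting in `f⁻¹(C)` the colour changes by exactly
one at every step, so `f(x_j) ≡ C + j (mod 2)`; and `x₀ = h(C)`, since `h(C)` is the only vertex
of colour `C` that has neighbours. On the alternating tail of an oriented path the direction of
the edge between `a` and `a ± 1` depends only on the parity of `a`. Hence the edge of `B` joining
`x_j` and `x_{j+1}` points the same way as the edge of `P` between `C + j` and `C + j + 1`,
whatever the actual colours are, and `h` on `{1,…,C-1}` followed by `x` embeds `P`.
Conversely an embedding `g` of `P` gives the path `g(C), …, g(k)`, coloured by `g⁻¹`.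
-/

namespace RootedPathDigraph

variable {k : ℕ} (P : RootedPathDigraph k)

def IsOriented : Prop :=
  ∀ i, 1 ≤ i → i + 1 ≤ k → ¬ (P.EP i (i + 1) ∧ P.EP (i + 1) i)

def HasAlternatingTail (C : ℕ) : Prop :=
  ∀ i, max C 2 ≤ i → i + 1 ≤ k → (P.EP i (i + 1) ↔ ¬ P.EP (i - 1) i)

variable {P}

lemma IsOriented.EP_succ_left_iff (hP : P.IsOriented) {i : ℕ} (hi : 1 ≤ i) (hik : i + 1 ≤ k) :
    P.EP (i + 1) i ↔ ¬ P.EP i (i + 1) :=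
  ⟨fun hb hf => hP i hi hik ⟨hf, hb⟩, (P.total i hi hik).resolve_left⟩

lemma HasAlternatingTail.exists_EP_succ_iff {C : ℕ} (hP : P.HasAlternatingTail C) :
    ∃ σ < 2, ∀ i, max C 2 ≤ i + 1 → i + 1 ≤ k → (P.EP i (i + 1) ↔ i % 2 = σ) := by
  classical
  set i₀ := max C 2 - 1
  refine ⟨if P.EP i₀ (i₀ + 1) then i₀ % 2 else (i₀ + 1) % 2, by split_ifs <;> omega,
    fun i hi hik => ?_⟩
  induction i, (show i₀ ≤ i by omega) using Nat.le_induction with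
  | base =>
    split_ifs with h
    · simp [h]
    · simp only [h, false_iff]
      omega
  | succ i hle ih =>
    rw [hP (i + 1) (by omega) hik, Nat.add_sub_cancel, ih (by omega) (by omega)]
    split_ifs <;> omega

lemma exists_EP_iff_mod_two {C : ℕ} (hO : P.IsOriented) (hT : P.HasAlternatingTail C) :
    ∃ σ, ∀ a b, (a + 1 = b ∨ b + 1 = a) → max C 2 ≤ a + 1 → max C 2 ≤ b + 1 → a ≤ k → b ≤ k →
      (P.EP a b ↔ a % 2 = σ) := by
  obtain ⟨σ, hσ, hfwd⟩ := hT.exists_EP_succ_iff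
  refine ⟨σ, ?_⟩
  rintro a b (rfl | rfl) ha hb hak hbk
  · exact hfwd a ha hbk
  · rw [hO.EP_succ_left_iff (by omega) hak, hfwd b hb hak]
    omega

end RootedPathDigraph

namespace SimpleGraph

variable {V : Type*} {G : SimpleGraph V}

lemma Walk.apply_getVert_mod_two {f : V → ℕ}
    (hf : ∀ a b, G.Adj a b → f a + 1 = f b ∨ f b + 1 = f a) {u v : V} (p : G.Walk u v) {j : ℕ}
    (hj : j ≤ p.length) : f (p.getVert j) % 2 = (f u + j) % 2 := by
  induction j with
  | zero => simp
  | succ j ih =>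
    have hstep := hf _ _ (p.adj_getVert_succ (by omega : j < p.length))
    have := ih (by omega)
    omega

lemma Walk.exists_adj_getVert {u v : V} (p : G.Walk u v) (hp : 0 < p.length) {j : ℕ}
    (hj : j ≤ p.length) : ∃ w, G.Adj (p.getVert j) w := by
  rcases hj.lt_or_eq with hj | rfl
  · exact ⟨_, p.adj_getVert_succ hj⟩
  · have hlast := p.adj_getVert_succ (by omega : p.length - 1 < p.length)
    rw [Nat.sub_add_cancel hp] at hlast
    exact ⟨_, hlast.symm⟩

lemma exists_isPath_of_adj_succ {g : ℕ → V} {n : ℕ} (hinj : Set.InjOn g (Set.Iic n))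
    (hadj : ∀ j < n, G.Adj (g j) (g (j + 1))) :
    ∃ p : G.Walk (g 0) (g n), p.IsPath ∧ p.length = n := by
  set l := (List.range (n + 1)).map g
  have hne : l ≠ [] := by simp [l]
  have hchain : l.IsChain G.Adj :=
    (List.isChain_map g).2 ((List.isChain_range_succ _ n).2 hadj)
  have hhead : l.head hne = g 0 := by simp [l, List.head_map]
  have hlast : l.getLast hne = g n := by simp [l, List.getLast_map, List.getLast_range]
  refine ⟨(Walk.ofSupport l hne hchain).copy hhead hlast, ?_, by simp [l]⟩
  rw [Walk.isPath_copy, Walk.isPath_def, Walk.support_ofSupport]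
  exact List.nodup_range.map_on fun a ha b hb => hinj (by simpa [Nat.lt_succ_iff] using ha)
    (by simpa [Nat.lt_succ_iff] using hb)

end SimpleGraph

section Gfh

variable {W : Type*} {k C : ℕ} {P : RootedPathDigraph k} {EB : W → W → Prop}
  {h : ℕ → W} {f : W → ℕ} {b b' : W}

lemma gfh_adj_ne (hadj : (Gfh P EB C h f).Adj b b') {j : ℕ} (hj : 1 ≤ j) (hjC : j + 1 ≤ C) :
    b ≠ h j := by
  rcases (SimpleGraph.fromRel_adj _ _ _).1 hadj with ⟨-, hr | hr⟩
  exacts [(hr.1 j hj hjC).1, (hr.1 j hj hjC).2]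

lemma gfh_adj_eq_of_apply_eq (hadj : (Gfh P EB C h f).Adj b b') (hb : f b = C) : b = h C := by
  rcases (SimpleGraph.fromRel_adj _ _ _).1 hadj with ⟨-, hr | hr⟩
  exacts [hr.2.2.2.2.1 hb, hr.2.2.2.2.2 hb]

lemma gfh_adj_succ_or_succ (hadj : (Gfh P EB C h f).Adj b b') :
    f b + 1 = f b' ∨ f b' + 1 = f b := by
  rcases (SimpleGraph.fromRel_adj _ _ _).1 hadj with ⟨-, hr | hr⟩
  exacts [hr.2.2.1, hr.2.2.1.symm]

lemma gfh_adj_edge (hadj : (Gfh P EB C h f).Adj b b') :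
    (EB b b' ∧ P.EP (f b) (f b')) ∨ (EB b' b ∧ P.EP (f b') (f b)) := by
  rcases (SimpleGraph.fromRel_adj _ _ _).1 hadj with ⟨-, hr | hr⟩
  exacts [.inl ⟨hr.2.1, hr.2.2.2.1⟩, .inr ⟨hr.2.1, hr.2.2.2.1⟩]

lemma gfh_adj_tail_edge (hO : P.IsOriented) (hT : P.HasAlternatingTail C) (hC1 : 1 ≤ C)
    (hf : ∀ w, f w ∈ Set.Icc C k) (hadj : (Gfh P EB C h f).Adj b b') {i : ℕ} (hi : C ≤ i)
    (hik : i + 1 ≤ k) (hpar : f b % 2 = i % 2) :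
    (P.EP i (i + 1) → EB b b') ∧ (P.EP (i + 1) i → EB b' b) := by
  obtain ⟨σ, hσ⟩ := RootedPathDigraph.exists_EP_iff_mod_two hO hT
  obtain ⟨hb, hbk⟩ := hf b
  obtain ⟨hb', hb'k⟩ := hf b'
  have hstep := gfh_adj_succ_or_succ hadj
  have hσ' : ∀ a c, (a + 1 = c ∨ c + 1 = a) → C ≤ a → C ≤ c → a ≤ k → c ≤ k →
      (P.EP a c ↔ a % 2 = σ) := fun a c hac ha hc hak hck =>
    hσ a c hac (by omega) (by omega) hak hck
  have hfwd := hσ' i (i + 1) (.inl rfl) hi (by omega) (by omega) hik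
  have hback := hσ' (i + 1) i (.inr rfl) (by omega) hi hik (by omega)
  rcases gfh_adj_edge hadj with ⟨hE, hP⟩ | ⟨hE, hP⟩
  · rw [hσ' _ _ hstep hb hb' hbk hb'k] at hP
    exact ⟨fun _ => hE, fun hPb => by have := hback.1 hPb; omega⟩
  · rw [hσ' _ _ hstep.symm hb' hb hb'k hbk] at hP
    exact ⟨fun hPf => by have := hfwd.1 hPf; omega, fun _ => hE⟩

end Gfh

section Embedding

variable {W : Type*} {k C : ℕ} {P : RootedPathDigraph k} {R : Set W} {EB : W → W → Prop}

lemma IsEmbeddingDown.isEmbeddingInto_append {h x : ℕ → W} (hh : IsEmbeddingDown P R EB C h)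
    (hC1 : 1 ≤ C) (hx0 : x 0 = h C) (hxinj : Set.InjOn x {j | j ≤ k - C})
    (hxh : ∀ j ≤ k - C, ∀ i, 1 ≤ i → i + 1 ≤ C → x j ≠ h i)
    (hxedge : ∀ j, C + j + 1 ≤ k →
      (P.EP (C + j) (C + j + 1) → EB (x j) (x (j + 1))) ∧
      (P.EP (C + j + 1) (C + j) → EB (x (j + 1)) (x j))) :
    IsEmbeddingInto P R EB (fun i => if i < C then h i else x (i - C)) := by
  refine ⟨?_, ?_, fun i hi hik => ?_⟩
  · rintro a ⟨ha, hak⟩ b ⟨hb, hbk⟩ hab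
    simp only at hab
    split_ifs at hab with haC hbC hbC
    · exact hh.1 ⟨ha, haC.le⟩ ⟨hb, hbC.le⟩ hab
    · exact absurd hab.symm (hxh _ (by omega) a ha haC)
    · exact absurd hab (hxh _ (by omega) b hb hbC)
    · have := hxinj (show a - C ≤ k - C by omega) (show b - C ≤ k - C by omega) hab
      omega
  · show (if 1 < C then h 1 else x (1 - C)) ∈ R
    split_ifs with h1C
    · exact hh.2.1
    · rw [Nat.sub_eq_zero_of_le (by omega), hx0, show C = 1 by omega]
      exact hh.2.1
  · simp only
    rcases lt_trichotomy (i + 1) C with hlt | heq | hgt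
    · rw [if_pos (by omega), if_pos hlt]
      exact hh.2.2 i hi hlt.le
    · rw [if_pos (by omega), if_neg (by omega), show i + 1 - C = 0 by omega, hx0, ← heq]
      exact hh.2.2 i hi heq.le
    · rw [if_neg (by omega), if_neg (by omega), show i + 1 - C = i - C + 1 by omega]
      have := hxedge (i - C) (by omega)
      rwa [Nat.add_sub_cancel' (by omega)] at this

lemma exists_isEmbeddingInto_of_gfh_path {h : ℕ → W} {f : W → ℕ} (hO : P.IsOriented)
    (hT : P.HasAlternatingTail C) (hC1 : 1 ≤ C) (hCk : C < k) (hf : ∀ w, f w ∈ Set.Icc C k)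
    (hh : IsEmbeddingDown P R EB C h) {u v : W} (hu : f u = C) (p : (Gfh P EB C h f).Walk u v)
    (hp : p.IsPath) (hlen : p.length = k - C) : ∃ g, IsEmbeddingInto P R EB g := by
  have hpos : 0 < p.length := by omega
  have hstart := p.adj_getVert_succ hpos
  rw [p.getVert_zero] at hstart
  have hu_eq : p.getVert 0 = h C := by rw [p.getVert_zero]; exact gfh_adj_eq_of_apply_eq hstart hu
  refine ⟨_, hh.isEmbeddingInto_append hC1 hu_eq (hlen ▸ hp.getVert_injOn) ?_ ?_⟩
  · intro j hj i hi hiC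
    obtain ⟨w, hw⟩ := p.exists_adj_getVert hpos (hj.trans hlen.ge)
    exact gfh_adj_ne hw hi hiC
  · intro j hj
    have hpar := p.apply_getVert_mod_two (fun _ _ => gfh_adj_succ_or_succ) (j := j) (by omega)
    exact gfh_adj_tail_edge hO hT hC1 hf (p.adj_getVert_succ (by omega)) (by omega) hj
      (by rw [hpar, hu])

open Classical in
noncomputable def tailColoring (g : ℕ → W) (C k : ℕ) (w : W) : ℕ :=
  if w ∈ g '' Set.Icc C k then Function.invFunOn g (Set.Icc C k) w else C

lemma tailColoring_mem_Icc (g : ℕ → W) (hCk : C ≤ k) (w : W) :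
    tailColoring g C k w ∈ Set.Icc C k := by
  unfold tailColoring
  split_ifs with hw
  · exact Function.invFunOn_mem hw
  · exact ⟨le_rfl, hCk⟩

lemma tailColoring_apply {g : ℕ → W} (hinj : Set.InjOn g (Set.Icc C k)) {i : ℕ}
    (hi : i ∈ Set.Icc C k) : tailColoring g C k (g i) = i := by
  rw [tailColoring, if_pos (Set.mem_image_of_mem g hi)]
  exact hinj.leftInvOn_invFunOn hi

variable {g : ℕ → W}

lemma IsEmbeddingInto.isEmbeddingDown (hg : IsEmbeddingInto P R EB g) (hCk : C ≤ k) :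
    IsEmbeddingDown P R EB C g :=
  ⟨hg.1.mono (Set.Icc_subset_Icc_right hCk), hg.2.1, fun i hi hiC => hg.2.2 i hi (hiC.trans hCk)⟩

lemma IsEmbeddingInto.tailColoring_apply (hg : IsEmbeddingInto P R EB g) (hC1 : 1 ≤ C) {i : ℕ}
    (hi : C ≤ i) (hik : i ≤ k) : tailColoring g C k (g i) = i :=
  _root_.tailColoring_apply (hg.1.mono (Set.Icc_subset_Icc_left hC1)) ⟨hi, hik⟩

lemma IsEmbeddingInto.gfh_adj (hg : IsEmbeddingInto P R EB g) (hC1 : 1 ≤ C) {i : ℕ}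
    (hi : C ≤ i) (hik : i + 1 ≤ k) :
    (Gfh P EB C g (tailColoring g C k)).Adj (g i) (g (i + 1)) := by
  have hinj {a b : ℕ} (ha : 1 ≤ a) (hak : a ≤ k) (hb : 1 ≤ b) (hbk : b ≤ k) (hab : g a = g b) :
      a = b :=
    hg.1 ⟨ha, hak⟩ ⟨hb, hbk⟩ hab
  have havoid {a : ℕ} (ha : C ≤ a) (hak : a ≤ k) (j : ℕ) (hj : 1 ≤ j) (hjC : j + 1 ≤ C) :
      g a ≠ g j := fun hga => by
    have := hinj (by omega) hak hj (by omega) hga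
    omega
  rw [Gfh, SimpleGraph.fromRel_adj, hg.tailColoring_apply hC1 hi (by omega),
    hg.tailColoring_apply hC1 (by omega) hik]
  refine ⟨fun hga => by have := hinj (by omega) (by omega) (by omega) hik hga; omega, ?_⟩
  rcases P.total i (by omega) hik with hfwd | hback
  · exact .inl ⟨fun j hj hjC => ⟨havoid hi (by omega) j hj hjC, havoid (by omega) hik j hj hjC⟩,
      (hg.2.2 i (by omega) hik).1 hfwd, .inl rfl, hfwd, congrArg g, fun _ => by omega⟩
  · exact .inr ⟨fun j hj hjC => ⟨havoid (by omega) hik j hj hjC, havoid hi (by omega) j hj hjC⟩,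
      (hg.2.2 i (by omega) hik).2 hback, .inr rfl, hback, fun _ => by omega, congrArg g⟩

lemma IsEmbeddingInto.exists_gfh_path (hg : IsEmbeddingInto P R EB g) (hC1 : 1 ≤ C)
    (hCk : C ≤ k) :
    ∃ p : (Gfh P EB C g (tailColoring g C k)).Walk (g C) (g k), p.IsPath ∧ p.length = k - C := by
  have hinj : Set.InjOn (fun j => g (C + j)) (Set.Iic (k - C)) := fun a ha b hb hab => by
    have := hg.1 (show C + a ∈ Set.Icc 1 k from ⟨by omega, by simp at ha; omega⟩)
      (show C + b ∈ Set.Icc 1 k from ⟨by omega, by simp at hb; omega⟩) hab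
    omega
  have hpath := SimpleGraph.exists_isPath_of_adj_succ (G := Gfh P EB C g (tailColoring g C k))
    hinj (fun j hj => hg.gfh_adj hC1 (by omega) (by omega))
  rwa [Nat.add_zero, Nat.add_sub_cancel' hCk] at hpath

end Embedding

/-- Correctness of the parameterized logarithmic space algorithm in the proof of
Theorem 5.1: for a rooted oriented path `P` on `k` vertices with a `C`-alternating
tail (`1 ≤ C < k`) and a rooted digraph structure `B = (W, R, E_B)`, the following
are equivalent: (i) there are a coloring `f : W → {C,…,k}` and an embedding `h` of
`P↓C` into `B` such that `G(f,h)` contains a path of length `k−C` with an endpoint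
in `f⁻¹(C)`; (ii) `P` embeds into `B`. -/
theorem stmt13 {W : Type*} (k C : ℕ) (hC1 : 1 ≤ C) (hCk : C < k)
    (P : RootedPathDigraph k)
    (horient : ∀ i, 1 ≤ i → i + 1 ≤ k → ¬ (P.EP i (i + 1) ∧ P.EP (i + 1) i))
    (htail : ∀ i, max C 2 ≤ i → i + 1 ≤ k → (P.EP i (i + 1) ↔ ¬ P.EP (i - 1) i))
    (R : Set W) (EB : W → W → Prop) :
    (∃ (f : W → ℕ) (h : ℕ → W), (∀ w, f w ∈ Set.Icc C k) ∧
        IsEmbeddingDown P R EB C h ∧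
        ∃ u v, f u = C ∧
          ∃ p : (Gfh P EB C h f).Walk u v, p.IsPath ∧ p.length = k - C) ↔
    (∃ h : ℕ → W, IsEmbeddingInto P R EB h) := by
  constructor
  · rintro ⟨f, h, hf, hh, u, v, hu, p, hp, hlen⟩
    exact exists_isEmbeddingInto_of_gfh_path horient htail hC1 hCk hf hh hu p hp hlen
  · rintro ⟨g, hg⟩
    obtain ⟨p, hp, hlen⟩ := hg.exists_gfh_path hC1 hCk.le
    exact ⟨tailColoring g C k, g, tailColoring_mem_Icc g hCk.le, hg.isEmbeddingDown hCk.le,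
      g C, g k, hg.tailColoring_apply hC1 le_rfl hCk.le, p, hp, hlen⟩
end

section
/- Let k, ℓ ∈ ℕ with k < ℓ, and let P_{k,ℓ} be the rooted path digraph on ℓ+1 vertices with edge set E_P = {(i,i+1) : 1 ≤ i ≤ ℓ} ∪ {(i+1,i) : 1 ≤ i ≤ ℓ and i ≠ k+1}. Then for every i ∈ {1,…,ℓ}, the edge e_i of P_{k,ℓ} is unfoldable if and only if i = k+2 (in particular, if k+2 > ℓ then P_{k,ℓ} has no unfoldable edge), and no edge of P_{k,ℓ} is unfoldable of degree 2. -/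
/-- The edge relation of the rooted path digraph `P_{k,ℓ}` on `{1,…,ℓ+1}`:
all forward edges `(i,i+1)` for `1 ≤ i ≤ ℓ`, and all backward edges `(i+1,i)` for
`1 ≤ i ≤ ℓ` except `i = k+1`. -/
def PklEdge (k l a b : ℕ) : Prop :=
  (b = a + 1 ∧ 1 ≤ a ∧ a ≤ l) ∨ (a = b + 1 ∧ 1 ≤ b ∧ b ≤ l ∧ b ≠ k + 1)

/-- The observation in the proof of Theorem 6.1: in `P_{k,ℓ}` (with `k < ℓ`), an
edge `e_i` (`1 ≤ i ≤ ℓ`) is unfoldable iff `i = k+2` (so if `k+2 > ℓ` there is no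
unfoldable edge), and no edge is unfoldable of degree `2`. -/
theorem stmt15 (k l : ℕ) (hkl : k < l) (P : RootedPathDigraph (l + 1))
    (hP : ∀ a b, P.EP a b ↔ PklEdge k l a b) :
    (∀ i, 1 ≤ i → i ≤ l → (UnfoldableDeg P i 1 ↔ i = k + 2)) ∧
    (∀ i, 1 ≤ i → i ≤ l → ¬ UnfoldableDeg P i 2) := by
  have hfwd : ∀ j, P.EP j (j + 1) ↔ (1 ≤ j ∧ j ≤ l) := by
    intro j; rw [hP]; unfold PklEdge; omega
  have hbwd : ∀ j, P.EP (j + 1) j ↔ (1 ≤ j ∧ j ≤ l ∧ j ≠ k + 1) := by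
    intro j; rw [hP]; unfold PklEdge; omega
  constructor
  · intro i h1 h2
    constructor
    · rintro ⟨hi, hfail⟩
      by_contra hne
      apply hfail 1 le_rfl le_rfl
      right
      refine ⟨odd_one, fun _ => ?_, fun _ => ?_, by omega⟩
      · exact (hbwd (i - 1)).2 ⟨by omega, by omega, by omega⟩
      · exact (hfwd (i - 1)).2 ⟨by omega, by omega⟩
    · rintro rfl
      refine ⟨by omega, ?_⟩
      intro m h1m h2m hsub
      have hm : m = 1 := by omega
      subst hm
      rcases hsub with ⟨heven, _⟩ | ⟨_, hf, _, _⟩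
      · simp [Nat.even_iff] at heven
      · have h := hf ((hfwd _).2 ⟨by omega, by omega⟩)
        have := ((hbwd (k + 2 - 1)).1 h).2.2
        omega
  · rintro i h1 h2 ⟨hi, hfail⟩
    by_cases hc : i = k + 3
    · apply hfail 1 le_rfl (by norm_num)
      right
      refine ⟨odd_one, fun _ => ?_, fun _ => ?_, by omega⟩
      · exact (hbwd (i - 1)).2 ⟨by omega, by omega, by omega⟩
      · exact (hfwd (i - 1)).2 ⟨by omega, by omega⟩
    · apply hfail 2 (by norm_num) le_rfl
      left
      refine ⟨even_two, fun _ => ?_, fun hb => ?_, by omega⟩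
      · exact (hfwd (i - 2)).2 ⟨by omega, by omega⟩
      · have hik := ((hbwd i).1 hb).2.2
        exact (hbwd (i - 2)).2 ⟨by omega, by omega, by omega⟩
end
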